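/- arXiv:2311.02518 — 9 statements merged into one kernel-verified Lean document; each statement's English description precedes it below -/
import Mathlib

section
/- Let R > 0 and let f : ℂ → ℂ be holomorphic on the ball B(0,R) with f(0) = 0 and λ := f'(0) ≠ 0, and assume f(z) ≠ 0 for all z ∈ B(0,R) ∖ {0}. Then, as ε → 0⁺, the circle integrals ∮_{|z|=ε} ( 2·log|f(z)|·(f'(z)/f(z)) − 2·log|z|·(1/z) ) dz converge to 2πi·log(|λ|²). Equivalently, the dynamical residue of the measure dz̄ dz/|z|² at a fixed point of multiplier λ equals log|λ|². -/
/-!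
Factor `f z = z * g z` with `g 0 = λ ≠ 0`. Then `log|f| = log|z| + log|g|` and
`f'/f = 1/z + g'/g`, so the integrand is `z⁻¹ • Ψ z` for a density `Ψ` that is continuous at `0`
with `Ψ 0 = 2 log|λ|`: the only singular-looking term, `log|z| · z`, tends to `0`. Shrinking the
circle, `∮ z⁻¹ • Ψ z dz` tends to `2πi • Ψ 0`, as in the proof of the Cauchy integral formula.
-/

open Filter Topology Metric Complex Real

theorem continuous_log_norm_smul {E : Type*} [NormedAddCommGroup E] [NormedSpace ℝ E] :
    Continuous fun x : E => Real.log ‖x‖ • x := by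
  rw [continuous_iff_continuousAt]
  intro x
  rcases eq_or_ne x 0 with rfl | hx
  · have h : Tendsto (fun x : E => ‖x‖ * Real.log ‖x‖) (𝓝 0) (𝓝 0) :=
      (Real.continuous_mul_log.comp continuous_norm).tendsto' 0 0 (by simp)
    rw [ContinuousAt, smul_zero, tendsto_zero_iff_norm_tendsto_zero]
    simpa [norm_smul, mul_comm] using h.norm
  · exact (continuous_norm.continuousAt.log (norm_ne_zero_iff.2 hx)).smul continuousAt_id

theorem tendsto_circleIntegral_sub_center_inv_smul_of_tendsto {E : Type*}
    [NormedAddCommGroup E] [NormedSpace ℂ E] [CompleteSpace E] {c : ℂ} {r : ℝ} (hr : 0 < r)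
    {Φ : ℂ → E} {y : E} (hc : ContinuousOn Φ (ball c r \ {c}))
    (hy : Tendsto Φ (𝓝[≠] c) (𝓝 y)) :
    Tendsto (fun ε : ℝ => ∮ z in C(c, ε), (z - c)⁻¹ • Φ z) (𝓝[>] 0)
      (𝓝 ((2 * π * I : ℂ) • y)) := by
  refine nhds_basis_closedBall.tendsto_right_iff.2 fun η hη => ?_
  obtain ⟨δ, hδ, hΦ⟩ := Metric.tendsto_nhdsWithin_nhds.1 hy (η / (2 * π)) (by positivity)
  filter_upwards [Ioo_mem_nhdsGT (lt_min hδ hr)] with ε ⟨hε, hεδr⟩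
  have hsphere : ∀ z ∈ sphere c ε, z ≠ c ∧ dist z c < min δ r := fun z hz =>
    ⟨ne_of_mem_sphere hz hε.ne', (mem_sphere.1 hz).trans_lt hεδr⟩
  have hinv : ContinuousOn (fun z => (z - c)⁻¹) (sphere c ε) :=
    (continuousOn_id.sub continuousOn_const).inv₀ fun z hz => sub_ne_zero.2 (hsphere z hz).1
  have hΦc : ContinuousOn Φ (sphere c ε) := hc.mono fun z hz =>
    ⟨(hsphere z hz).2.trans_le (min_le_right _ _), (hsphere z hz).1⟩
  rw [mem_closedBall]
  calc dist (∮ z in C(c, ε), (z - c)⁻¹ • Φ z) ((2 * π * I : ℂ) • y)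
      = ‖∮ z in C(c, ε), (z - c)⁻¹ • (Φ z - y)‖ := by
        simp only [smul_sub]
        rw [circleIntegral.integral_sub ((hinv.fun_smul hΦc).circleIntegrable hε.le)
          ((hinv.fun_smul continuousOn_const).circleIntegrable hε.le),
          circleIntegral.integral_smul_const, circleIntegral.integral_sub_center_inv c hε.ne',
          dist_eq_norm]
    _ ≤ 2 * π * ε * (ε⁻¹ * (η / (2 * π))) := by
        refine circleIntegral.norm_integral_le_of_norm_le_const hε.le fun z hz => ?_
        rw [norm_smul, norm_inv, ← dist_eq_norm, mem_sphere.1 hz, ← dist_eq_norm]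
        gcongr
        exact (hΦ (hsphere z hz).1 ((hsphere z hz).2.trans_le (min_le_left _ _))).le
    _ = η := by field_simp

/-- `z` times the integrand when `f z = z * g z`; `log|f|` is split as `log|z| + log|g|` so that
the factor `log‖z‖ * z` makes it continuous at `0`. -/
noncomputable def logResidueDensity (g : ℂ → ℂ) (z : ℂ) : ℂ :=
  2 * Real.log ‖g z‖ + 2 * (Real.log ‖z‖ * z + Real.log ‖g z‖ * z) * (deriv g z / g z)

theorem continuousOn_logResidueDensity {g : ℂ → ℂ} {s : Set ℂ} (hg : DifferentiableOn ℂ g s)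
    (hs : IsOpen s) (hg0 : ∀ z ∈ s, g z ≠ 0) : ContinuousOn (logResidueDensity g) s := by
  have hlog_g : ContinuousOn (fun z => (Real.log ‖g z‖ : ℂ)) s :=
    continuous_ofReal.comp_continuousOn
      (hg.continuousOn.norm.log fun z hz => norm_ne_zero_iff.2 (hg0 z hz))
  have hlog_z : Continuous fun z : ℂ => (Real.log ‖z‖ : ℂ) * z := by
    simpa only [Complex.real_smul] using continuous_log_norm_smul (E := ℂ)
  exact (continuousOn_const.mul hlog_g).add <|
    (continuousOn_const.mul (hlog_z.continuousOn.add (hlog_g.mul continuousOn_id))).mul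
      ((hg.deriv hs).continuousOn.div hg.continuousOn hg0)

theorem logResidueDensity_zero (g : ℂ → ℂ) : logResidueDensity g 0 = 2 * Real.log ‖g 0‖ := by
  simp [logResidueDensity]

theorem two_log_norm_mul_logDeriv_sub_eq {f g : ℂ → ℂ} {z : ℂ} (hfg : f = fun w => w * g w)
    (hg : DifferentiableAt ℂ g z) (hz : z ≠ 0) (hgz : g z ≠ 0) :
    (2 * Real.log ‖f z‖ : ℂ) * (deriv f z / f z) - (2 * Real.log ‖z‖ : ℂ) * (1 / z) =
      z⁻¹ * logResidueDensity g z := by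
  have hderiv : deriv f z = g z + z * deriv g z := by
    rw [hfg, deriv_fun_mul differentiableAt_fun_id hg, deriv_id'', one_mul]
  have hlog : Real.log ‖f z‖ = Real.log ‖z‖ + Real.log ‖g z‖ := by
    rw [hfg, norm_mul, Real.log_mul (norm_ne_zero_iff.2 hz) (norm_ne_zero_iff.2 hgz)]
  rw [hderiv, hlog, hfg, logResidueDensity]
  push_cast
  field_simp
  ring

/-- The Stokes computation (Res4) of Epstein's dynamical residue
`Res_f(dz̄ dz/|z|²) = log|λ|²` at a fixed point of multiplier `λ`: as
`ε → 0⁺`, the circle integrals of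
`2 log|f z| · f'(z)/f(z) − 2 log|z| · (1/z)` over `|z| = ε` converge to
`2πi · log(|λ|²)`. -/
theorem dynamical_residue_of_invariant_metric
    (R : ℝ) (hR : 0 < R) (f : ℂ → ℂ)
    (hf : DifferentiableOn ℂ f (Metric.ball (0 : ℂ) R))
    (hf0 : f 0 = 0) (lam : ℂ) (hlam : deriv f 0 = lam) (hlam0 : lam ≠ 0)
    (hnz : ∀ z ∈ Metric.ball (0 : ℂ) R, z ≠ 0 → f z ≠ 0) :
    Tendsto
      (fun ε : ℝ => ∮ z in C(0, ε),
        ((2 * Real.log (‖f z‖) : ℂ) * (deriv f z / f z)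
          - (2 * Real.log (‖z‖) : ℂ) * (1 / z)))
      (𝓝[>] (0 : ℝ))
      (𝓝 ((2 * Real.pi : ℝ) * Complex.I * (Real.log (‖lam‖ ^ 2) : ℂ))) := by
  set g := dslope f 0
  have hfg : f = fun z => z * g z :=
    funext fun z => by simpa [hf0] using (sub_smul_dslope f 0 z).symm
  have hg : DifferentiableOn ℂ g (ball 0 R) :=
    (differentiableOn_dslope (ball_mem_nhds 0 hR)).2 hf
  have hg0 : g 0 = lam := (dslope_same f 0).trans hlam
  have hg_ne : ∀ z ∈ ball 0 R, g z ≠ 0 := by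
    intro z hz
    rcases eq_or_ne z 0 with rfl | hz0
    · rwa [hg0]
    · exact right_ne_zero_of_mul (hfg ▸ hnz z hz hz0)
  have hΨ := continuousOn_logResidueDensity hg isOpen_ball hg_ne
  have hlim := tendsto_circleIntegral_sub_center_inv_smul_of_tendsto hR (hΨ.mono Set.sdiff_subset)
    ((hΨ.continuousAt (ball_mem_nhds 0 hR)).tendsto.mono_left nhdsWithin_le_nhds)
  rw [logResidueDensity_zero, hg0] at hlim
  convert hlim.congr' ?_ using 2
  · rw [Real.log_pow, smul_eq_mul]
    push_cast
    ring
  · filter_upwards [Ioo_mem_nhdsGT hR] with ε hε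
    refine circleIntegral.integral_congr hε.1.le fun z hz => ?_
    have hz0 : z ≠ 0 := ne_of_mem_sphere hz hε.1.ne'
    have hzR : z ∈ ball 0 R := sphere_subset_ball hε.2 hz
    rw [sub_zero, smul_eq_mul]
    exact (two_log_norm_mul_logDeriv_sub_eq hfg (hg.differentiableAt (isOpen_ball.mem_nhds hzR))
      hz0 (hg_ne z hzR)).symm
end

section
/- Let a > 2, C ≥ 0, k ∈ ℕ and X₀ ∈ ℝ. Let h be holomorphic on the half-plane H = {s ∈ ℂ : Re s > X₀} and satisfy |h(s+1) − h(s)| ≤ C·|s|^{−a} and |h(s)| ≤ C·(1 + |Im s|)^k for all s ∈ H. Then there exist λ∞ ∈ ℂ and K ≥ 0 such that |h(s) − λ∞| ≤ K·(log(2 + Re s))²·(Re s)^{1−a} for all s ∈ H with Re s ≥ X₀ + 2 and Re s ≥ 2. In particular h(s) → λ∞ uniformly in Im s as Re s → +∞. -/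
/-!
The limit `λ∞(s) = lim_{n → ∞} h (s + n)` exists for every `s`, because the increments
`h (s + n + 1) - h (s + n)` are `O((Re s + n)^(-a))`. It is `1`-periodic, entire (far to the
right it is `h` plus a uniformly convergent series of holomorphic functions, and periodicity
moves every point there), and it inherits the bound `C (1 + |Im s|)^k`. An entire periodic
function of polynomial growth in `Im s` is constant: Cauchy's estimate on circles of radius
`1 + |Im s|` lowers the degree of growth of the derivative by one, so by induction the
derivative is constant, hence zero by periodicity; the base case is Liouville's theorem.
The rate is the tail `∑ₙ (Re s + n)^(-a) ≤ a / (a - 1) · (Re s)^(1 - a)`.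
-/

open Filter Finset Topology Function

theorem tendsto_of_hasSum_sub {E : Type*} [AddCommGroup E] [TopologicalSpace E]
    [IsTopologicalAddGroup E] {u : ℕ → E} {L : E} (hu : HasSum (fun n => u (n + 1) - u n) L) :
    Tendsto u atTop (𝓝 (u 0 + L)) := by
  have := hu.tendsto_sum_nat.const_add (u 0)
  simpa only [sum_range_sub, add_sub_cancel] using this

theorem sum_range_add_nat_rpow_neg_le {a x : ℝ} (ha : 1 < a) (hx : 0 < x) (N : ℕ) :
    ∑ n ∈ range N, (x + ↑(n + 1)) ^ (-a) ≤ x ^ (1 - a) / (a - 1) := by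
  have hanti : AntitoneOn (fun t : ℝ => t ^ (-a)) (Set.Icc x (x + N)) := fun s hs t _ hst =>
    Real.rpow_le_rpow_of_nonpos (hx.trans_le hs.1) hst (by linarith)
  have hint : ∫ t in x..x + N, t ^ (-a) = (x ^ (1 - a) - (x + N) ^ (1 - a)) / (a - 1) := by
    rw [integral_rpow (Or.inr ⟨by linarith, fun h0 => ?_⟩)]
    · rw [show -a + 1 = 1 - a by ring, ← neg_div_neg_eq, neg_sub, neg_sub]
    · rw [Set.uIcc_of_le (by simp)] at h0
      exact absurd h0.1 (not_le.2 hx)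
  calc ∑ n ∈ range N, (x + ↑(n + 1)) ^ (-a) ≤ ∫ t in x..x + N, t ^ (-a) := hanti.sum_le_integral
    _ ≤ x ^ (1 - a) / (a - 1) := by
      rw [hint]
      exact div_le_div_of_nonneg_right (sub_le_self _ (by positivity)) (by linarith)

theorem summable_add_nat_rpow_neg {a x : ℝ} (ha : 1 < a) (hx : 0 < x) :
    Summable fun n : ℕ => (x + n) ^ (-a) := by
  refine (summable_nat_add_iff 1).mp (summable_of_sum_range_le (fun n => ?_)
    (sum_range_add_nat_rpow_neg_le ha hx))
  positivity

theorem tsum_add_nat_rpow_neg_le {a x : ℝ} (ha : 1 < a) (hx : 1 ≤ x) :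
    ∑' n : ℕ, (x + n) ^ (-a) ≤ a / (a - 1) * x ^ (1 - a) := by
  have hx0 : 0 < x := by linarith
  have htail : ∑' n : ℕ, (x + ↑(n + 1)) ^ (-a) ≤ x ^ (1 - a) / (a - 1) :=
    Real.tsum_le_of_sum_range_le (fun n => by positivity) (sum_range_add_nat_rpow_neg_le ha hx0)
  have hhead : x ^ (-a) ≤ x ^ (1 - a) := Real.rpow_le_rpow_of_exponent_le hx (by linarith)
  rw [(summable_add_nat_rpow_neg ha hx0).tsum_eq_zero_add]
  calc (x + ((0 : ℕ) : ℝ)) ^ (-a) + ∑' n : ℕ, (x + ↑(n + 1)) ^ (-a)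
      ≤ x ^ (1 - a) + x ^ (1 - a) / (a - 1) := by simpa using add_le_add hhead htail
    _ = a / (a - 1) * x ^ (1 - a) := by
      have : a - 1 ≠ 0 := by linarith
      field_simp
      ring

theorem Function.Periodic.deriv {𝕜 F : Type*} [NontriviallyNormedField 𝕜] [NormedAddCommGroup F]
    [NormedSpace 𝕜 F] {f : 𝕜 → F} {p : 𝕜} (hf : Periodic f p) : Periodic (_root_.deriv f) p :=
  fun s => by rw [← deriv_comp_add_const, show (fun x => f (x + p)) = f from funext hf]

section PolynomialGrowth

variable {F : Type*} [NormedAddCommGroup F] [NormedSpace ℂ F]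

theorem Differentiable.norm_deriv_le_of_norm_le_mul_one_add_abs_im_pow {f : ℂ → F}
    (hf : Differentiable ℂ f) {A : ℝ} {k : ℕ}
    (hbound : ∀ s, ‖f s‖ ≤ A * (1 + |s.im|) ^ (k + 1)) (s : ℂ) :
    ‖_root_.deriv f s‖ ≤ 2 ^ (k + 1) * A * (1 + |s.im|) ^ k := by
  have hA : 0 ≤ A := by simpa using (norm_nonneg _).trans (hbound 0)
  -- Cauchy's estimate on the circle of radius `R = 1 + |Im s|`, on which `1 + |Im w| ≤ 2 R`.
  set R := 1 + |s.im|
  have hR0 : 0 < R := by positivity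
  have hsphere : ∀ w ∈ Metric.sphere s R, ‖f w‖ ≤ A * (2 * R) ^ (k + 1) := by
    intro w hw
    have him : |(w - s).im| ≤ R := by
      simpa [mem_sphere_iff_norm.mp hw] using Complex.abs_im_le_norm (w - s)
    have : 1 + |w.im| ≤ 2 * R := by
      have := abs_sub_abs_le_abs_sub w.im s.im
      rw [Complex.sub_im] at him
      linarith
    exact (hbound w).trans (by gcongr)
  calc ‖_root_.deriv f s‖ ≤ A * (2 * R) ^ (k + 1) / R :=
        Complex.norm_deriv_le_of_forall_mem_sphere_norm_le hR0 hf.diffContOnCl hsphere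
    _ = 2 ^ (k + 1) * A * R ^ k := by rw [mul_pow, pow_succ R]; field_simp

variable [CompleteSpace F]

theorem Differentiable.apply_eq_apply_of_periodic_of_norm_le {f : ℂ → F} {p : ℂ} {A : ℝ}
    {k : ℕ} (hf : Differentiable ℂ f) (hper : Periodic f p) (hp : p ≠ 0)
    (hbound : ∀ s, ‖f s‖ ≤ A * (1 + |s.im|) ^ k) (z w : ℂ) : f z = f w := by
  induction k generalizing f A z w with
  | zero =>
    exact hf.apply_eq_apply_of_bounded
      (isBounded_iff_forall_norm_le.2 ⟨A, by simpa using hbound⟩) z w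
  | succ k ih =>
    have hderiv_const : ∀ s, _root_.deriv f s = _root_.deriv f 0 := fun s =>
      ih hf.deriv hper.deriv (hf.norm_deriv_le_of_norm_le_mul_one_add_abs_im_pow hbound) s 0
    -- `f s - s • f'(0)` has zero derivative, and periodicity forces `p • f'(0) = 0`.
    have hlin : ∀ s, f s - s • _root_.deriv f 0 = f 0 := fun s => by
      simpa using is_const_of_deriv_eq_zero (hf.sub (differentiable_id.smul_const _))
        (fun t => by
          simp [deriv_sub, hf t, hderiv_const t, ((hasDerivAt_id' t).smul_const _).deriv]) s 0
    have hzero : _root_.deriv f 0 = 0 := by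
      have := hlin p
      rw [hper.eq, sub_eq_self, smul_eq_zero] at this
      exact this.resolve_left hp
    exact is_const_of_deriv_eq_zero hf (fun s => (hderiv_const s).trans hzero) z w

end PolynomialGrowth

/-- Under the hypotheses below the limit exists for every `s` (`tendsto_translateLimit`), so the
junk value of `limUnder` never occurs. -/
noncomputable def translateLimit (h : ℂ → ℂ) (s : ℂ) : ℂ :=
  limUnder atTop fun n : ℕ => h (s + n)

section TranslateLimit

variable {h : ℂ → ℂ} {X₀ a C : ℝ}

theorem norm_sub_add_nat_le (hC : 0 ≤ C) (ha : 0 ≤ a)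
    (h1 : ∀ s : ℂ, X₀ < s.re → ‖h (s + 1) - h s‖ ≤ C * ‖s‖ ^ (-a))
    {s : ℂ} (hX : X₀ < s.re) (hs : 0 < s.re) (n : ℕ) :
    ‖h (s + ↑(n + 1)) - h (s + n)‖ ≤ C * (s.re + n) ^ (-a) := by
  have hre : (s + n).re = s.re + n := by simp
  have hpos : 0 < s.re + n := by positivity
  calc ‖h (s + ↑(n + 1)) - h (s + n)‖ = ‖h (s + n + 1) - h (s + n)‖ := by
        rw [Nat.cast_succ, add_assoc]
    _ ≤ C * ‖s + n‖ ^ (-a) := h1 _ (by rw [hre]; linarith [n.cast_nonneg (α := ℝ)])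
    _ ≤ C * (s.re + n) ^ (-a) := mul_le_mul_of_nonneg_left
      (Real.rpow_le_rpow_of_nonpos hpos (hre ▸ Complex.re_le_norm _) (neg_nonpos.2 ha)) hC

theorem summable_sub_add_nat (hC : 0 ≤ C) (ha : 1 < a)
    (h1 : ∀ s : ℂ, X₀ < s.re → ‖h (s + 1) - h s‖ ≤ C * ‖s‖ ^ (-a))
    {s : ℂ} (hX : X₀ < s.re) (hs : 0 < s.re) :
    Summable fun n : ℕ => h (s + ↑(n + 1)) - h (s + n) :=
  .of_norm_bounded ((summable_add_nat_rpow_neg ha hs).mul_left C)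
    (norm_sub_add_nat_le hC (by linarith) h1 hX hs)

theorem tendsto_translateLimit (hC : 0 ≤ C) (ha : 1 < a)
    (h1 : ∀ s : ℂ, X₀ < s.re → ‖h (s + 1) - h s‖ ≤ C * ‖s‖ ^ (-a)) (s : ℂ) :
    Tendsto (fun n : ℕ => h (s + n)) atTop (𝓝 (translateLimit h s)) := by
  obtain ⟨m, hm⟩ := exists_nat_gt (max X₀ 0 - s.re)
  have hre : (s + m).re = s.re + m := by simp
  have hconv := tendsto_of_hasSum_sub (u := fun n : ℕ => h (s + m + n))
    (summable_sub_add_nat hC ha h1 (by rw [hre]; linarith [le_max_left X₀ 0])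
      (by rw [hre]; linarith [le_max_right X₀ 0])).hasSum
  exact tendsto_nhds_limUnder ⟨_, (tendsto_add_atTop_iff_nat m).1 <| hconv.congr fun n => by
    rw [Nat.cast_add, add_comm (n : ℂ), add_assoc]⟩

theorem translateLimit_periodic (hC : 0 ≤ C) (ha : 1 < a)
    (h1 : ∀ s : ℂ, X₀ < s.re → ‖h (s + 1) - h s‖ ≤ C * ‖s‖ ^ (-a)) :
    Periodic (translateLimit h) 1 := fun s =>
  tendsto_nhds_unique (tendsto_translateLimit hC ha h1 (s + 1)) <|
    ((tendsto_add_atTop_iff_nat 1).2 (tendsto_translateLimit hC ha h1 s)).congr fun n => by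
      rw [Nat.cast_succ, add_comm (n : ℂ), add_assoc]

theorem translateLimit_eq_add_tsum (hC : 0 ≤ C) (ha : 1 < a)
    (h1 : ∀ s : ℂ, X₀ < s.re → ‖h (s + 1) - h s‖ ≤ C * ‖s‖ ^ (-a))
    {s : ℂ} (hX : X₀ < s.re) (hs : 0 < s.re) :
    translateLimit h s = h s + ∑' n : ℕ, (h (s + ↑(n + 1)) - h (s + n)) :=
  tendsto_nhds_unique (tendsto_translateLimit hC ha h1 s) <| by
    simpa using tendsto_of_hasSum_sub (u := fun n : ℕ => h (s + n))
      (summable_sub_add_nat hC ha h1 hX hs).hasSum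

theorem differentiableOn_translateLimit (hC : 0 ≤ C) (ha : 1 < a)
    (hd : DifferentiableOn ℂ h {s : ℂ | X₀ < s.re})
    (h1 : ∀ s : ℂ, X₀ < s.re → ‖h (s + 1) - h s‖ ≤ C * ‖s‖ ^ (-a)) :
    DifferentiableOn ℂ (translateLimit h) {s : ℂ | max X₀ 1 < s.re} := by
  set B := max X₀ 1
  have hB : 0 < B := lt_max_of_lt_right one_pos
  have hshift (n : ℕ) : DifferentiableOn ℂ (fun s => h (s + n)) {s : ℂ | B < s.re} :=
    hd.comp (differentiableOn_id.add_const _) fun s (hs : B < s.re) => by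
      show X₀ < (s + n).re
      rw [Complex.add_re, Complex.natCast_re]
      linarith [le_max_left X₀ 1, n.cast_nonneg (α := ℝ)]
  have hbound (n : ℕ) (s : ℂ) (hs : B < s.re) :
      ‖h (s + ↑(n + 1)) - h (s + n)‖ ≤ C * (B + n) ^ (-a) :=
    (norm_sub_add_nat_le hC (by linarith) h1 (by linarith [le_max_left X₀ 1]) (hB.trans hs) n).trans
      (mul_le_mul_of_nonneg_left (Real.rpow_le_rpow_of_nonpos (by positivity)
        (by linarith) (by linarith)) hC)
  have hsum := Complex.differentiableOn_tsum_of_summable_norm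
    ((summable_add_nat_rpow_neg ha hB).mul_left C) (fun n => (hshift (n + 1)).sub (hshift n))
    (isOpen_lt continuous_const Complex.continuous_re) hbound
  refine ((hd.mono fun s (hs : B < s.re) => ?_).add hsum).congr fun s (hs : B < s.re) => ?_
  · exact (le_max_left X₀ 1).trans_lt hs
  · exact translateLimit_eq_add_tsum hC ha h1 ((le_max_left X₀ 1).trans_lt hs) (hB.trans hs)

theorem differentiable_translateLimit (hC : 0 ≤ C) (ha : 1 < a)
    (hd : DifferentiableOn ℂ h {s : ℂ | X₀ < s.re})
    (h1 : ∀ s : ℂ, X₀ < s.re → ‖h (s + 1) - h s‖ ≤ C * ‖s‖ ^ (-a)) :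
    Differentiable ℂ (translateLimit h) := by
  intro s
  obtain ⟨m, hm⟩ := exists_nat_gt (max X₀ 1 - s.re)
  have hshift : (fun w => translateLimit h (w + m)) = translateLimit h :=
    funext fun w => by simpa using (translateLimit_periodic hC ha h1).nat_mul m w
  have hmem : s + m ∈ {s : ℂ | max X₀ 1 < s.re} := by
    show max X₀ 1 < (s + m).re
    rw [Complex.add_re, Complex.natCast_re]
    linarith
  have := ((differentiableOn_translateLimit hC ha hd h1).differentiableAt
    ((isOpen_lt continuous_const Complex.continuous_re).mem_nhds hmem)).comp s
      (differentiableAt_id.add_const (m : ℂ))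
  simpa only [Function.comp_def, id_eq, hshift] using this

theorem norm_translateLimit_le {A : ℝ} {k : ℕ} (hC : 0 ≤ C) (ha : 1 < a)
    (h1 : ∀ s : ℂ, X₀ < s.re → ‖h (s + 1) - h s‖ ≤ C * ‖s‖ ^ (-a))
    (h2 : ∀ s : ℂ, X₀ < s.re → ‖h s‖ ≤ A * (1 + |s.im|) ^ k) (s : ℂ) :
    ‖translateLimit h s‖ ≤ A * (1 + |s.im|) ^ k := by
  obtain ⟨N, hN⟩ := exists_nat_gt (X₀ - s.re)
  refine le_of_tendsto (tendsto_translateLimit hC ha h1 s).norm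
    (eventually_atTop.2 ⟨N, fun n hn => ?_⟩)
  have hn' : (N : ℝ) ≤ n := by exact_mod_cast hn
  simpa using h2 (s + n) (by simp only [Complex.add_re, Complex.natCast_re]; linarith)

theorem translateLimit_eq {A : ℝ} {k : ℕ} (hC : 0 ≤ C) (ha : 1 < a)
    (hd : DifferentiableOn ℂ h {s : ℂ | X₀ < s.re})
    (h1 : ∀ s : ℂ, X₀ < s.re → ‖h (s + 1) - h s‖ ≤ C * ‖s‖ ^ (-a))
    (h2 : ∀ s : ℂ, X₀ < s.re → ‖h s‖ ≤ A * (1 + |s.im|) ^ k) (s t : ℂ) :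
    translateLimit h s = translateLimit h t :=
  (differentiable_translateLimit hC ha hd h1).apply_eq_apply_of_periodic_of_norm_le
    (translateLimit_periodic hC ha h1) one_ne_zero (norm_translateLimit_le hC ha h1 h2) s t

theorem norm_sub_translateLimit_le (hC : 0 ≤ C) (ha : 1 < a)
    (h1 : ∀ s : ℂ, X₀ < s.re → ‖h (s + 1) - h s‖ ≤ C * ‖s‖ ^ (-a))
    {s : ℂ} (hX : X₀ < s.re) (hs : 1 ≤ s.re) :
    ‖h s - translateLimit h s‖ ≤ C * (a / (a - 1)) * s.re ^ (1 - a) := by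
  have hs0 : 0 < s.re := by linarith
  rw [translateLimit_eq_add_tsum hC ha h1 hX hs0, sub_add_cancel_left, norm_neg, mul_assoc]
  calc ‖∑' n : ℕ, (h (s + ↑(n + 1)) - h (s + n))‖ ≤ C * ∑' n : ℕ, (s.re + n) ^ (-a) :=
        (summable_sub_add_nat hC ha h1 hX hs0).hasSum.norm_le_of_bounded
          ((summable_add_nat_rpow_neg ha hs0).hasSum.mul_left C)
          (norm_sub_add_nat_le hC (by linarith) h1 hX hs0)
    _ ≤ C * (a / (a - 1) * s.re ^ (1 - a)) :=
        mul_le_mul_of_nonneg_left (tsum_add_nat_rpow_neg_le ha hs) hC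

end TranslateLimit

/-- Corollary Dcor:3: a holomorphic function on a right half-plane which is
nearly 1-periodic with error `O(|s|^{-a})`, `a > 2`, and has polynomial growth
in `Im s`, converges at rate `(Re s)^{1-a}` (up to logarithms) to a limit
`λ∞`, uniformly in `Im s`, as `Re s → +∞`. -/
theorem nearly_periodic_limit_at_infinity
    (a C : ℝ) (ha : 2 < a) (hC : 0 ≤ C) (k : ℕ) (X₀ : ℝ) (h : ℂ → ℂ)
    (hd : DifferentiableOn ℂ h {s : ℂ | X₀ < s.re})
    (h1 : ∀ s : ℂ, X₀ < s.re → ‖h (s + 1) - h s‖ ≤ C * ‖s‖ ^ (-a))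
    (h2 : ∀ s : ℂ, X₀ < s.re → ‖h s‖ ≤ C * (1 + |s.im|) ^ k) :
    ∃ lam : ℂ, ∃ K : ℝ, 0 ≤ K ∧
      (∀ s : ℂ, X₀ < s.re → X₀ + 2 ≤ s.re → 2 ≤ s.re →
        ‖h s - lam‖ ≤ K * (Real.log (2 + s.re)) ^ 2 * s.re ^ (1 - a)) ∧
      (∀ ε : ℝ, 0 < ε → ∃ X : ℝ, ∀ s : ℂ, X₀ < s.re → X ≤ s.re →
        ‖h s - lam‖ ≤ ε) := by
  have ha1 : 1 < a := by linarith
  set K := C * (a / (a - 1))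
  have hK : 0 ≤ K := mul_nonneg hC (div_nonneg (by linarith) (by linarith))
  have hbound (s : ℂ) (hX : X₀ < s.re) (hs : 1 ≤ s.re) :
      ‖h s - translateLimit h 0‖ ≤ K * s.re ^ (1 - a) :=
    translateLimit_eq hC ha1 hd h1 h2 0 s ▸ norm_sub_translateLimit_le hC ha1 h1 hX hs
  refine ⟨translateLimit h 0, K, hK, fun s hX _ hs => ?_, fun ε hε => ?_⟩
  · have hlog : 1 ≤ Real.log (2 + s.re) := by
      rw [Real.le_log_iff_exp_le (by linarith)]
      linarith [Real.exp_one_lt_d9]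
    calc ‖h s - translateLimit h 0‖ ≤ K * s.re ^ (1 - a) := hbound s hX (by linarith)
      _ ≤ K * s.re ^ (1 - a) * Real.log (2 + s.re) ^ 2 :=
        le_mul_of_one_le_right (by positivity) (one_le_pow₀ hlog)
      _ = K * Real.log (2 + s.re) ^ 2 * s.re ^ (1 - a) := by ring
  · have hdecay : Tendsto (fun x : ℝ => K * x ^ (1 - a)) atTop (𝓝 0) := by
      simpa [neg_sub] using (tendsto_rpow_neg_atTop (by linarith : 0 < a - 1)).const_mul K
    obtain ⟨X, hX⟩ := eventually_atTop.1 (hdecay.eventually (ge_mem_nhds hε))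
    exact ⟨max X 1, fun s hX₀ hs =>
      (hbound s hX₀ ((le_max_right _ _).trans hs)).trans (hX _ ((le_max_left _ _).trans hs))⟩
end

section
/- Let W : ℂ → ℂ be holomorphic on ℂ ∖ {0}, and suppose there are C ≥ 0 and k ∈ ℕ with |W(σ)| ≤ C·(1 + | log|σ| |)^k for all σ ≠ 0. Then W is constant on ℂ ∖ {0}. -/
/-! The bound makes `W` little-o of `z⁻¹` at `0` and of `z` at infinity, because every power of
`log` is little-o of the identity. The first estimate makes the singularity at `0` removable; for
the resulting entire function the second gives constancy, since its difference quotient at `0` is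
entire and tends to `0` at infinity, hence vanishes by Liouville's theorem. -/

open Filter Topology Asymptotics Real

theorem isLittleO_one_add_abs_log_pow_atTop (k : ℕ) :
    (fun r : ℝ => (1 + |log r|) ^ k) =o[atTop] id := by
  have h := (isLittleO_pow_log_id_atTop (n := k)).comp_tendsto
    (tendsto_id.const_mul_atTop (exp_pos 1))
  refine (h.trans_isBigO ((isBigO_refl _ _).const_mul_left _)).congr' ?_ EventuallyEq.rfl
  filter_upwards [eventually_ge_atTop 1] with r hr
  -- `1 + log r = log (e * r)` for `r ≥ 1`
  simp [log_mul (exp_pos 1).ne' (by positivity : r ≠ 0), abs_of_nonneg (log_nonneg hr)]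

theorem isLittleO_one_add_abs_log_pow_nhdsGT_zero (k : ℕ) :
    (fun r : ℝ => (1 + |log r|) ^ k) =o[𝓝[>] 0] fun r => r⁻¹ := by
  simpa [Function.comp_def, log_inv] using
    (isLittleO_one_add_abs_log_pow_atTop k).comp_tendsto tendsto_inv_nhdsGT_zero

theorem isLittleO_one_add_abs_log_norm_pow_cocompact {E : Type*} [NormedAddCommGroup E]
    [ProperSpace E] (k : ℕ) :
    (fun z : E => (1 + |log ‖z‖|) ^ k) =o[cocompact E] id :=
  isLittleO_norm_right.1 <|
    (isLittleO_one_add_abs_log_pow_atTop k).comp_tendsto tendsto_norm_cocompact_atTop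

theorem isLittleO_one_add_abs_log_norm_pow_nhdsNE_zero {𝕜 : Type*} [NormedField 𝕜] (k : ℕ) :
    (fun z : 𝕜 => (1 + |log ‖z‖|) ^ k) =o[𝓝[≠] 0] fun z => z⁻¹ := by
  refine isLittleO_norm_right.1 ?_
  simpa only [Function.comp_def, norm_inv] using
    (isLittleO_one_add_abs_log_pow_nhdsGT_zero k).comp_tendsto tendsto_norm_nhdsNE_zero

section Liouville

variable {E : Type*} [NormedAddCommGroup E] [NormedSpace ℂ E] [CompleteSpace E] {f : ℂ → E}

theorem Differentiable.apply_eq_apply_of_isLittleO_cocompact (hf : Differentiable ℂ f)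
    (ho : f =o[cocompact ℂ] id) (z w : ℂ) : f z = f w := by
  suffices h : ∀ z, f z = f 0 from (h z).trans (h w).symm
  intro z
  rcases eq_or_ne z 0 with rfl | hz
  · rfl
  have hd : Differentiable ℂ (dslope f 0) := differentiableOn_univ.1 <|
    (Complex.differentiableOn_dslope univ_mem).2 hf.differentiableOn
  have hlim : Tendsto (dslope f 0) (cocompact ℂ) (𝓝 0) := by
    have hsub : (fun w => f w - f 0) =o[cocompact ℂ] id :=
      ho.sub (isLittleO_const_left.2 (Or.inr tendsto_norm_cocompact_atTop))
    refine hsub.tendsto_inv_smul_nhds_zero.congr' ?_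
    filter_upwards [isCompact_singleton.compl_mem_cocompact] with w (hw : w ≠ 0)
    simp [dslope_of_ne _ hw, slope_def_module]
  have h0 := hd.apply_eq_of_tendsto_cocompact z hlim
  rwa [dslope_of_ne _ hz, slope_def_module, smul_eq_zero, inv_eq_zero, sub_zero,
    or_iff_right hz, sub_eq_zero] at h0

theorem DifferentiableOn.apply_eq_apply_of_isLittleO_nhdsNE_zero_of_isLittleO_cocompact
    (hf : DifferentiableOn ℂ f {0}ᶜ) (h0 : f =o[𝓝[≠] 0] fun z => z⁻¹)
    (hinf : f =o[cocompact ℂ] id) {z w : ℂ} (hz : z ≠ 0) (hw : w ≠ 0) : f z = f w := by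
  set g := Function.update f 0 (limUnder (𝓝[≠] 0) f)
  have hgf : ∀ z, z ≠ 0 → g z = f z := fun z hz => Function.update_of_ne hz _ _
  have hg : Differentiable ℂ g := by
    have ho : (fun z => f z - f 0) =o[𝓝[≠] 0] fun z => (z - 0)⁻¹ := by
      simpa only [sub_zero] using
        h0.sub (isLittleO_const_left.2 (Or.inr tendsto_norm_inv_nhdsNE_zero_atTop))
    rw [← differentiableOn_univ, ← Set.union_compl_self {0}]
    exact Complex.differentiableOn_update_limUnder_insert_of_isLittleO self_mem_nhdsWithin hf ho
  have hginf : g =o[cocompact ℂ] id := hinf.congr'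
    (mem_of_superset isCompact_singleton.compl_mem_cocompact fun z hz => (hgf z hz).symm)
    EventuallyEq.rfl
  rw [← hgf z hz, ← hgf w hw]
  exact hg.apply_eq_apply_of_isLittleO_cocompact hginf z w

end Liouville

theorem polylog_growth_constant_general
    (W : ℂ → ℂ) (hW : DifferentiableOn ℂ W {σ : ℂ | σ ≠ 0})
    (C : ℝ) (k : ℕ)
    (hb : ∀ σ : ℂ, σ ≠ 0 → ‖W σ‖ ≤ C * (1 + |Real.log ‖σ‖|) ^ k) :
    ∀ σ τ : ℂ, σ ≠ 0 → τ ≠ 0 → W σ = W τ := by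
  have hbigO : ∀ l : Filter ℂ, (∀ᶠ z in l, z ≠ 0) →
      W =O[l] fun z => (1 + |Real.log ‖z‖|) ^ k := fun l hl =>
    IsBigO.of_bound C <| hl.mono fun z hz => by
      rw [Real.norm_of_nonneg (by positivity)]
      exact hb z hz
  intro σ τ hσ hτ
  exact hW.apply_eq_apply_of_isLittleO_nhdsNE_zero_of_isLittleO_cocompact
    ((hbigO _ self_mem_nhdsWithin).trans_isLittleO
      (isLittleO_one_add_abs_log_norm_pow_nhdsNE_zero k))
    ((hbigO _ isCompact_singleton.compl_mem_cocompact).trans_isLittleO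
      (isLittleO_one_add_abs_log_norm_pow_cocompact k)) hσ hτ

/-- The sub-meromorphic growth Liouville step (Res28) used in Corollaries
Dcor:2 and Dcor:3: a holomorphic function on the punctured plane with
polylogarithmic growth at both `0` and `∞` is constant. -/
theorem polylog_growth_constant
    (W : ℂ → ℂ) (hW : DifferentiableOn ℂ W {σ : ℂ | σ ≠ 0})
    (C : ℝ) (hC : 0 ≤ C) (k : ℕ)
    (hb : ∀ σ : ℂ, σ ≠ 0 → ‖W σ‖ ≤ C * (1 + |Real.log ‖σ‖|) ^ k) :
    ∀ σ τ : ℂ, σ ≠ 0 → τ ≠ 0 → W σ = W τ :=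
  polylog_growth_constant_general W hW C k hb
end

section
/- Let R ∈ ℝ, r > 0 and V = {s ∈ ℂ : Re s > R and |Im s| < r}. Let g be holomorphic on V with g(s+1) = g(s) for all s ∈ V (note that s ∈ V implies s+1 ∈ V), and suppose g(t) → 0 as t → +∞ along the real axis. Then g vanishes identically on V. -/
/-!
By periodicity, `g t = g (t + n)` for real `t > R`, and letting `n → ∞` gives `g t = 0` on the
whole ray `(R, ∞)`. This ray accumulates at each of its points, which lie in the connected open
half-strip, so the identity theorem makes `g` vanish on all of it.
-/

open Filter Topology Set

namespace Complex

def halfStrip (R r : ℝ) : Set ℂ := {s : ℂ | R < s.re ∧ |s.im| < r}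

theorem isOpen_halfStrip (R r : ℝ) : IsOpen (halfStrip R r) :=
  (isOpen_lt continuous_const continuous_re).inter
    (isOpen_lt (continuous_abs.comp continuous_im) continuous_const)

theorem convex_halfStrip (R r : ℝ) : Convex ℝ (halfStrip R r) := by
  have hstrip : halfStrip R r = {s | R < s.re} ∩ im ⁻¹' Ioo (-r) r := by
    ext s
    simp only [halfStrip, mem_inter_iff, mem_ofPred_eq, mem_preimage, mem_Ioo, abs_lt]
  rw [hstrip]
  exact (convex_halfSpace_re_gt R).inter
    ((convex_Ioo (-r) r).is_linear_preimage (.mk add_im smul_im))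

theorem ofReal_mem_halfStrip {R r t : ℝ} (hr : 0 < r) (ht : R < t) :
    (t : ℂ) ∈ halfStrip R r :=
  ⟨by simpa using ht, by simpa using hr⟩

theorem tendsto_ofReal_nhdsGT (x : ℝ) :
    Tendsto ((↑) : ℝ → ℂ) (𝓝[>] x) (𝓝[≠] (x : ℂ)) :=
  tendsto_nhdsWithin_of_tendsto_nhds_of_eventually_within _
    (continuous_ofReal.tendsto x |>.mono_left nhdsWithin_le_nhds)
    (eventually_nhdsWithin_of_forall fun _ ht => ofReal_injective.ne (ne_of_gt (mem_Ioi.1 ht)))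

theorem frequently_nhdsNE_ofReal_of_eventually_nhdsGT {p : ℂ → Prop} {x : ℝ}
    (h : ∀ᶠ t : ℝ in 𝓝[>] x, p t) : ∃ᶠ z in 𝓝[≠] (x : ℂ), p z :=
  (tendsto_ofReal_nhdsGT x).frequently h.frequently

end Complex

theorem eq_of_periodic_of_tendsto_atTop {X : Type*} [TopologicalSpace X] [T2Space X]
    {f : ℝ → X} {R : ℝ} {a : X} (hper : ∀ t, R < t → f (t + 1) = f t)
    (hlim : Tendsto f atTop (𝓝 a)) {t : ℝ} (ht : R < t) : f t = a := by
  have hshift : ∀ n : ℕ, f (t + n) = f t := by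
    intro n
    induction n with
    | zero => simp
    | succ k ih =>
      rw [Nat.cast_succ, ← add_assoc, hper (t + k) (by linarith [k.cast_nonneg (α := ℝ)]), ih]
  refine tendsto_nhds_unique ?_
    (hlim.comp (tendsto_atTop_add_const_left _ t tendsto_natCast_atTop_atTop))
  simp only [Function.comp_def, hshift, tendsto_const_nhds]

theorem periodic_on_half_strip_vanishing_general
    (R r : ℝ) (g : ℂ → ℂ)
    (hd : DifferentiableOn ℂ g {s : ℂ | R < s.re ∧ |s.im| < r})
    (hper : ∀ s : ℂ, R < s.re → |s.im| < r → g (s + 1) = g s)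
    (hlim : Tendsto (fun t : ℝ => g (t : ℂ)) atTop (𝓝 0)) :
    ∀ s : ℂ, R < s.re → |s.im| < r → g s = 0 := by
  intro s hre him
  have hr : 0 < r := (abs_nonneg _).trans_lt him
  have hreal : ∀ t : ℝ, R < t → g t = 0 := fun t ht =>
    eq_of_periodic_of_tendsto_atTop (f := fun t : ℝ => g t) (fun u hu => by
      have hu' := Complex.ofReal_mem_halfStrip hr hu
      simpa using hper u hu'.1 hu'.2) hlim ht
  have hfreq : ∃ᶠ z in 𝓝[≠] (s.re : ℂ), g z = 0 :=
    Complex.frequently_nhdsNE_ofReal_of_eventually_nhdsGT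
      (eventually_nhdsWithin_of_forall fun (t : ℝ) ht => hreal t (hre.trans ht))
  have hanalytic := hd.analyticOnNhd (Complex.isOpen_halfStrip R r)
  exact hanalytic.eqOn_zero_of_preconnected_of_frequently_eq_zero
    (Complex.convex_halfStrip R r).isPreconnected (Complex.ofReal_mem_halfStrip hr hre) hfreq
    ⟨hre, him⟩

/-- The uniqueness step (Res51)–(Res52) of Scholion DSchol:1: a 1-periodic
holomorphic function on a right half-strip tending to `0` along the real axis
vanishes identically. -/
theorem periodic_on_half_strip_vanishing
    (R r : ℝ) (hr : 0 < r) (g : ℂ → ℂ)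
    (hd : DifferentiableOn ℂ g {s : ℂ | R < s.re ∧ |s.im| < r})
    (hper : ∀ s : ℂ, R < s.re → |s.im| < r → g (s + 1) = g s)
    (hlim : Tendsto (fun t : ℝ => g (t : ℂ)) atTop (𝓝 0)) :
    ∀ s : ℂ, R < s.re → |s.im| < r → g s = 0 :=
  periodic_on_half_strip_vanishing_general R r g hd hper hlim
end

section
/- Let p, q be coprime polynomials over ℂ with max(deg p, deg q) ≥ 2, so that f = p/q is a rational map of degree at least 2, and let v be a polynomial over ℂ of degree at most 2 (so that v(z)∂/∂z is a global holomorphic vector field on ℙ¹). Suppose that for every z ∈ ℂ with q(z) ≠ 0 one has v(p(z)/q(z))·q(z)² = (p'(z)·q(z) − p(z)·q'(z))·v(z), i.e. v∘f = f'·v wherever f is defined. Then v = 0. -/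
/-!
Put `r = p - q X`, whose roots are the fixed points of `f = p / q`. Expanding `v` to second
order around `z` turns the invariance into the Wronskian identity `W(q v, r) = v₂ r²`. In
characteristic zero `r ^ 2 ∣ W(a, r)` forces `r ∣ a` (after dividing out `gcd a r`, the cofactor
of `r` would divide its own derivative), and `r` is coprime to `q`, so `v = r g`. The identity
then collapses to `(q g)' = -v₂`, so both `q g` and `p g = v + X (q g)` have degree at most one,
contradicting `max (deg p) (deg q) ≥ 2`.
-/

open Polynomial

namespace Polynomial

variable {K : Type*} [Field K]

/-- Taylor expansion at `z` of the homogenisation `b ^ 2 * v (a / b)` of a quadratic polynomial. -/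
theorem eval_div_mul_sq_of_degree_le_two {v : K[X]} (hv : v.degree ≤ 2) (z a : K) {b : K}
    (hb : b ≠ 0) :
    v.eval (a / b) * b ^ 2 = v.eval z * b ^ 2 + (derivative v).eval z * (a - z * b) * b
      + v.coeff 2 * (a - z * b) ^ 2 := by
  rw [eq_quadratic_of_degree_le_two hv]
  simp only [eval_add, eval_mul, eval_C, eval_pow, eval_X, eval_one,
    derivative_mul, derivative_C, derivative_X_pow_succ, derivative_X, coeff_add, coeff_C_mul,
    coeff_X_pow, coeff_mul_X, coeff_C_succ, map_add, map_one, Nat.cast_one, pow_one, zero_mul,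
    mul_one, zero_add, add_zero, ↓reduceIte]
  field_simp
  ring

theorem wronskian_mul_mul (d a b : K[X]) :
    wronskian (d * a) (d * b) = d ^ 2 * wronskian a b := by
  simp only [wronskian, derivative_mul]
  ring

theorem dvd_of_sq_dvd_wronskian [CharZero K] {a r : K[X]} (hr : r ≠ 0)
    (h : r ^ 2 ∣ wronskian a r) : r ∣ a := by
  classical
  obtain ⟨a₁, r₁, ha, hr', hunit⟩ := extract_gcd a r
  set d := gcd a r
  have hd : d ≠ 0 := gcd_ne_zero_of_right hr
  have hr₁ : r₁ ≠ 0 := right_ne_zero_of_mul (hr' ▸ hr)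
  have hcop : IsCoprime a₁ r₁ := (gcd_isUnit_iff a₁ r₁).1 hunit
  rw [ha, hr', wronskian_mul_mul, mul_pow] at h
  have h₁ : r₁ ^ 2 ∣ wronskian a₁ r₁ := (mul_dvd_mul_iff_left (pow_ne_zero 2 hd)).1 h
  have h₂ : r₁ ∣ derivative r₁ := by
    refine hcop.symm.dvd_of_dvd_mul_left ?_
    have := (dvd_pow_self r₁ two_ne_zero |>.trans h₁).add (dvd_mul_left r₁ (derivative a₁))
    rwa [wronskian, sub_add_cancel] at this
  have hunit₁ : IsUnit r₁ := by
    rw [dvd_derivative_iff, derivative_eq_zero] at h₂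
    rw [eq_C_of_natDegree_eq_zero h₂] at hr₁ ⊢
    exact isUnit_C.2 (Ne.isUnit (C_ne_zero.1 hr₁))
  rw [hr', ha]
  exact mul_dvd_mul_left d hunit₁.dvd

theorem eq_C_mul_X_add_C_of_derivative_eq_C [CharZero K] {f : K[X]} {c : K}
    (hf : derivative f = C c) : f = C c * X + C (f.coeff 0) := by
  have h : derivative (f - C c * X) = 0 := by
    rw [derivative_sub, derivative_C_mul_X, hf, sub_self]
  have := eq_C_of_derivative_eq_zero h
  rw [coeff_sub, coeff_C_mul_X, if_neg zero_ne_one, sub_zero] at this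
  exact sub_eq_iff_eq_add'.1 this

theorem degree_add_X_mul_le_one [CharZero K] {v ℓ : K[X]} (hv : v.degree ≤ 2)
    (hℓ : derivative ℓ = C (-v.coeff 2)) : (v + X * ℓ).degree ≤ 1 := by
  have hlin : v + X * ℓ = C (v.coeff 1 + ℓ.coeff 0) * X + C (v.coeff 0) := by
    have hℓ' := eq_C_mul_X_add_C_of_derivative_eq_C hℓ
    rw [map_neg] at hℓ'
    rw [map_add]
    linear_combination X * hℓ' + eq_quadratic_of_degree_le_two hv
  exact hlin ▸ degree_linear_le

/-- In terms of the fixed-point polynomial `r = p - q X` of `f = p / q`, the invariance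
`v ∘ f = f' v` of a quadratic `v` becomes a polynomial identity. -/
theorem wronskian_eq_of_invariant [Infinite K] {p q v : K[X]} (hq : q ≠ 0) (hv : v.degree ≤ 2)
    (hinv : ∀ z : K, q.eval z ≠ 0 →
      v.eval (p.eval z / q.eval z) * (q.eval z) ^ 2 =
        (p.derivative.eval z * q.eval z - p.eval z * q.derivative.eval z) * v.eval z) :
    wronskian (q * v) (p - q * X) = C (v.coeff 2) * (p - q * X) ^ 2 := by
  refine eq_of_infinite_eval_eq _ _
    ((finite_setOfPred_isRoot hq).infinite_compl.mono fun z hz => ?_)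
  have hinvz := hinv z hz
  rw [eval_div_mul_sq_of_degree_le_two hv z _ hz] at hinvz
  simp only [Set.mem_ofPred_eq, wronskian, eval_mul, eval_sub, eval_pow, eval_C, eval_X,
    derivative_mul, derivative_sub, derivative_X, eval_add, eval_one]
  linear_combination -hinvz

end Polynomial

/-- The kernel computation (ct20)–(ct24) in Claim claim:ct1: a rational map
`f = p/q` of degree at least `2` admits no nonzero invariant global
holomorphic vector field `v(z)∂/∂z` (with `v` a polynomial of degree ≤ 2):
`v ∘ f = f' · v` forces `v = 0`. -/
theorem no_invariant_vector_field
    (p q v : Polynomial ℂ) (hpq : IsCoprime p q)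
    (hdeg : 2 ≤ max p.degree q.degree) (hv : v.degree ≤ 2)
    (hinv : ∀ z : ℂ, q.eval z ≠ 0 →
      v.eval (p.eval z / q.eval z) * (q.eval z) ^ 2 =
        (p.derivative.eval z * q.eval z - p.eval z * q.derivative.eval z)
          * v.eval z) :
    v = 0 := by
  by_contra hv0
  have hq0 : q ≠ 0 := by
    rintro rfl
    rw [isCoprime_zero_right] at hpq
    rw [degree_zero, degree_eq_zero_of_isUnit hpq, max_bot_right] at hdeg
    exact absurd hdeg (by decide)
  set r := p - q * X with hr
  have hrq : IsCoprime r q := IsCoprime.sub_mul_left_left_iff.2 hpq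
  have hr0 : r ≠ 0 := by
    intro h
    rw [h, isCoprime_zero_left] at hrq
    rw [sub_eq_zero.1 h, degree_mul, degree_X, degree_eq_zero_of_isUnit hrq] at hdeg
    simp at hdeg
  have hkey : wronskian (q * v) r = C (v.coeff 2) * r ^ 2 :=
    wronskian_eq_of_invariant hq0 hv hinv
  obtain ⟨g, rfl⟩ : r ∣ v :=
    hrq.dvd_of_dvd_mul_left (dvd_of_sq_dvd_wronskian hr0 (hkey ▸ dvd_mul_left _ _))
  have hg0 : g ≠ 0 := right_ne_zero_of_mul hv0
  have hqg : derivative (q * g) = C (-(r * g).coeff 2) := by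
    have hW : wronskian (q * (r * g)) r = r ^ 2 * -derivative (q * g) := by
      simp only [wronskian, derivative_mul]
      ring
    rw [hW, mul_comm (C _)] at hkey
    rw [map_neg, ← mul_left_cancel₀ (pow_ne_zero 2 hr0) hkey, neg_neg]
  have hp : p.degree ≤ 1 := by
    refine (degree_le_mul_left p hg0).trans ?_
    rw [show p * g = r * g + X * (q * g) by rw [hr]; ring]
    exact degree_add_X_mul_le_one hv hqg
  have hq : q.degree ≤ 1 :=
    (degree_le_mul_left q hg0).trans (eq_C_mul_X_add_C_of_derivative_eq_C hqg ▸ degree_linear_le)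
  exact absurd (hdeg.trans (max_le hp hq)) (by decide)
end

section
/- Let e ≥ 2 be a natural number and let w : ℕ → ℂ be the coefficient sequence of an everywhere-convergent power series, i.e. |w(n)|·rⁿ → 0 as n → ∞ for every real r > 0. If w(e+n) = e⁻¹·w(e + n·e) for every n ≥ 0, then w(e+n) = 0 for every n ≥ 0. -/
open Filter Topology

/-- The coefficient computation (ct48)–(ct50) in the proof of Corollary
cor:ct3: if `w` is the coefficient sequence of an everywhere-convergent power
series and `w(e+n) = e⁻¹·w(e+n·e)` for all `n`, with `e ≥ 2`, then
`w(e+n) = 0` for all `n`. -/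
theorem entire_coefficients_selfsimilar_vanish
    (e : ℕ) (he : 2 ≤ e) (w : ℕ → ℂ)
    (hconv : ∀ r : ℝ, 0 < r →
      Tendsto (fun n : ℕ => ‖w n‖ * r ^ n) atTop (𝓝 0))
    (hrec : ∀ n : ℕ, w (e + n) = (e : ℂ)⁻¹ * w (e + n * e)) :
    ∀ n : ℕ, w (e + n) = 0 := by
  have hnorm : Tendsto (fun n : ℕ => ‖w n‖) atTop (𝓝 0) := by
    simpa using hconv 1 one_pos
  obtain ⟨M, hM⟩ : ∃ M, ∀ k, ‖w k‖ ≤ M := by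
    obtain ⟨M, hM⟩ := hnorm.bddAbove_range
    exact ⟨M, fun k => hM ⟨k, rfl⟩⟩
  have key : ∀ m n : ℕ, w (e + n) = ((e : ℂ)⁻¹) ^ m * w (e + n * e ^ m) := by
    intro m
    induction m with
    | zero => intro n; simp
    | succ m ih =>
      intro n
      calc w (e + n) = ((e : ℂ)⁻¹) ^ m * w (e + n * e ^ m) := ih n
        _ = ((e : ℂ)⁻¹) ^ m * ((e : ℂ)⁻¹ * w (e + n * e ^ m * e)) := by rw [hrec]
        _ = ((e : ℂ)⁻¹) ^ (m + 1) * w (e + n * e ^ (m + 1)) := by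
            rw [pow_succ, pow_succ, mul_assoc n, mul_assoc]
  intro n
  have he1 : (1 : ℝ) < (e : ℝ) := by exact_mod_cast lt_of_lt_of_le one_lt_two he
  have hbound : ∀ m : ℕ, ‖w (e + n)‖ ≤ M * ((e : ℝ)⁻¹) ^ m := by
    intro m
    rw [key m n, norm_mul, norm_pow, norm_inv, Complex.norm_natCast]
    rw [mul_comm M]
    gcongr
    exact hM _
  have hlim : Tendsto (fun m : ℕ => M * ((e : ℝ)⁻¹) ^ m) atTop (𝓝 0) := by
    have : Tendsto (fun m : ℕ => ((e : ℝ)⁻¹) ^ m) atTop (𝓝 0) := by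
      apply tendsto_pow_atTop_nhds_zero_of_lt_one (by positivity) (by
        rw [inv_lt_one_iff₀]; right; exact he1)
    simpa using this.const_mul M
  have hz : Tendsto (fun _ : ℕ => ‖w (e + n)‖) atTop (𝓝 0) :=
    squeeze_zero (fun _ => norm_nonneg _) hbound hlim
  have := tendsto_nhds_unique tendsto_const_nhds hz
  simpa using this
end

section
/- For 0 < R and −π < a < b < π let S(R,a,b) = {z ∈ ℂ : z ≠ 0, |z| < R, a < arg z < b}. Let k ∈ ℕ and let h be holomorphic on S(R,a,b) such that H(r,θ) := h(r·e^{iθ}) extends to a function of class C^{k+2} up to the boundary on the half-open rectangle [0,R) × (a,b). Then for all a < a' < b' < b, 0 < R' < R and ε > 0 there exist a < a'' < a', b' < b'' < b and R' < R'' < R, and a function g holomorphic on S(R'',a'',b'') such that G(r,θ) := g(r·e^{iθ}) extends to a function C^∞ up to the boundary on [0,R'') × (a'',b''), and every iterated partial derivative in (r,θ) of H − G of total order at most k has absolute value at most ε on [0,R'] × [a',b']. -/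
open Complex Set Filter Topology

set_option maxHeartbeats 1600000

noncomputable section

/-- The open sector `{z ≠ 0 : |z| < R, a < arg z < b}`. -/
def openSector (R a b : ℝ) : Set ℂ :=
  {z : ℂ | z ≠ 0 ∧ ‖z‖ < R ∧ a < Complex.arg z ∧ Complex.arg z < b}

lemma SA.arg_exp_mul_I {θ : ℝ} (h1 : -Real.pi < θ) (h2 : θ ≤ Real.pi) :
    Complex.arg (Complex.exp ((θ : ℂ) * Complex.I)) = θ := by
  rw [Complex.exp_mul_I]; exact Complex.arg_cos_add_sin_mul_I ⟨h1, h2⟩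

lemma SA.mem_openSector_polar {R a b r θ : ℝ} (hr : 0 < r) (hrR : r < R)
    (hθa : a < θ) (hθb : θ < b) (hpa : -Real.pi < a) (hpb : b ≤ Real.pi) :
    (r : ℂ) * Complex.exp ((θ : ℂ) * Complex.I) ∈ openSector R a b := by
  have he1 : ‖Complex.exp ((θ : ℂ) * Complex.I)‖ = 1 :=
    Complex.norm_exp_ofReal_mul_I θ
  have harg : Complex.arg ((r : ℂ) * Complex.exp ((θ : ℂ) * Complex.I)) = θ := by
    rw [Complex.arg_real_mul _ hr, SA.arg_exp_mul_I (by linarith) (by linarith)]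
  refine ⟨mul_ne_zero (Complex.ofReal_ne_zero.2 hr.ne') (Complex.exp_ne_zero _), ?_, ?_, ?_⟩
  · rw [norm_mul, he1, Complex.norm_of_nonneg hr.le, mul_one]; exact hrR
  · rw [harg]; exact hθa
  · rw [harg]; exact hθb

lemma SA.openSector_mono {R₁ R₂ a₁ a₂ b₁ b₂ : ℝ} (hR : R₁ ≤ R₂) (ha : a₂ ≤ a₁) (hb : b₁ ≤ b₂) :
    openSector R₁ a₁ b₁ ⊆ openSector R₂ a₂ b₂ := by
  rintro z ⟨h0, h1, h2, h3⟩
  exact ⟨h0, lt_of_lt_of_le h1 hR, lt_of_le_of_lt ha h2, lt_of_lt_of_le h3 hb⟩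

lemma SA.isOpen_openSector {R a b : ℝ} (hpb : b ≤ Real.pi) : IsOpen (openSector R a b) := by
  rw [isOpen_iff_mem_nhds]
  rintro z ⟨h0, h1, h2, h3⟩
  have hslit : z ∈ Complex.slitPlane := by
    rw [Complex.mem_slitPlane_iff]
    by_contra hc
    push_neg at hc
    have hre : z.re < 0 := by
      rcases lt_or_eq_of_le hc.1 with h | h
      · exact h
      · exfalso; exact h0 (Complex.ext (by simp [← h]) (by simp [hc.2]))
    have : Complex.arg z = Real.pi := Complex.arg_eq_pi_iff.2 ⟨hre, hc.2⟩
    linarith [h3, hpb, this]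
  have hA : (fun w : ℂ => ‖w‖) ⁻¹' (Set.Iio R) ∈ 𝓝 z :=
    continuous_norm.continuousAt.preimage_mem_nhds (Iio_mem_nhds h1)
  have hB : Complex.arg ⁻¹' (Set.Ioo a b) ∈ 𝓝 z :=
    (Complex.continuousAt_arg hslit).preimage_mem_nhds (Ioo_mem_nhds h2 h3)
  have hC : {w : ℂ | w ≠ 0} ∈ 𝓝 z := compl_singleton_mem_nhds h0
  filter_upwards [hA, hB, hC] with w hw1 hw2 hw3
  exact ⟨hw3, hw1, hw2.1, hw2.2⟩

lemma SA.arg_add_between {u v : ℂ} (hu : u ≠ 0) (hv : v ≠ 0)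
    (hle : Complex.arg u ≤ Complex.arg v) (hlt : Complex.arg v - Complex.arg u < Real.pi)
    (hpa : -Real.pi < Complex.arg u) (hpb : Complex.arg v < Real.pi) :
    u + v ≠ 0 ∧ Complex.arg u ≤ Complex.arg (u + v) ∧ Complex.arg (u + v) ≤ Complex.arg v := by
  set α := Complex.arg u with hα
  set β := Complex.arg v with hβ
  set s := ‖u‖ with hs'
  set ρ := ‖v‖ with hρ'
  have hs : 0 < s := norm_pos_iff.mpr hu
  have hρ : 0 < ρ := norm_pos_iff.mpr hv
  set φ := β - α with hφdef
  have hφ0 : 0 ≤ φ := by simp [hφdef]; linarith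
  have hφπ : φ < Real.pi := hlt
  set ζ : ℂ := (s : ℂ) + (ρ : ℂ) * Complex.exp ((φ : ℂ) * Complex.I) with hζdef
  have hζ' : ζ = ((s + ρ * Real.cos φ : ℝ) : ℂ) + ((ρ * Real.sin φ : ℝ) : ℂ) * Complex.I := by
    rw [hζdef, Complex.exp_mul_I, ← Complex.ofReal_cos, ← Complex.ofReal_sin]
    push_cast
    ring
  have hre : ζ.re = s + ρ * Real.cos φ := by
    rw [hζ']
    simp [Complex.add_re, Complex.ofReal_re, Complex.mul_re, Complex.I_re, Complex.I_im, Complex.cos_ofReal_re, Complex.sin_ofReal_re]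
  have him : ζ.im = ρ * Real.sin φ := by
    rw [hζ']
    simp [Complex.add_im, Complex.ofReal_im, Complex.mul_im, Complex.I_re, Complex.I_im, Complex.cos_ofReal_re, Complex.sin_ofReal_re]
  have hsin0 : 0 ≤ Real.sin φ := Real.sin_nonneg_of_nonneg_of_le_pi hφ0 hφπ.le
  have hζne : ζ ≠ 0 := by
    intro h0
    have h1 : ρ * Real.sin φ = 0 := by rw [← him, h0]; simp
    have h2 : Real.sin φ = 0 := by
      rcases mul_eq_zero.1 h1 with h | h
      · exact absurd h hρ.ne'
      · exact h
    have h3 : φ = 0 := by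
      by_contra hne
      have : 0 < φ := lt_of_le_of_ne hφ0 (Ne.symm hne)
      have := Real.sin_pos_of_pos_of_lt_pi this hφπ
      linarith
    have h4 : ζ.re = 0 := by rw [h0]; simp
    rw [hre, h3] at h4
    simp [Real.cos_zero] at h4
    linarith
  have habs_le : ‖ζ‖ ≤ s + ρ := by
    calc ‖ζ‖ ≤ ‖((s:ℂ))‖ + ‖((ρ:ℂ) * Complex.exp ((φ:ℂ) * Complex.I))‖ :=
          norm_add_le _ _
      _ = s + ρ := by
          rw [norm_mul, Complex.norm_exp_ofReal_mul_I, Complex.norm_of_nonneg hs.le,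
            Complex.norm_of_nonneg hρ.le, mul_one]
  have habs_ge : ρ - s ≤ ‖ζ‖ := by
    have h1 : ‖(ρ:ℂ) * Complex.exp ((φ:ℂ) * Complex.I)‖ ≤ ‖ζ‖ + ‖((s:ℝ):ℂ)‖ := by
      have he : (ρ:ℂ) * Complex.exp ((φ:ℂ) * Complex.I) = ζ - (s:ℂ) := by rw [hζdef]; ring
      rw [he]
      exact norm_sub_le _ _
    rw [norm_mul,
      Complex.norm_exp_ofReal_mul_I, Complex.norm_of_nonneg hs.le, Complex.norm_of_nonneg hρ.le,
      mul_one] at h1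
    linarith
  have harg0 : 0 ≤ Complex.arg ζ := Complex.arg_nonneg_iff.2 (by rw [him]; positivity)
  have hargπ : Complex.arg ζ ≤ Real.pi := Complex.arg_le_pi ζ
  have hargφ : Complex.arg ζ ≤ φ := by
    rcases eq_or_lt_of_le hφ0 with h0 | hφpos
    · have hz : ζ = ((s + ρ : ℝ) : ℂ) := by
        rw [hζ', ← h0]; simp [Real.cos_zero, Real.sin_zero]
      rw [hz, Complex.arg_ofReal_of_nonneg (by positivity), ← h0]
    · have hcosarg : Real.cos (Complex.arg ζ) = ζ.re / ‖ζ‖ := Complex.cos_arg hζne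
      have habspos : 0 < ‖ζ‖ := norm_pos_iff.mpr hζne
      have hkey : ‖ζ‖ * Real.cos φ ≤ ζ.re := by
        have hc1 : Real.cos φ ≤ 1 := Real.cos_le_one φ
        have hc2 : -1 ≤ Real.cos φ := Real.neg_one_le_cos φ
        rw [hre]
        nlinarith [habs_le, habs_ge, hs, hρ, norm_nonneg ζ]
      have hcos_ge : Real.cos φ ≤ Real.cos (Complex.arg ζ) := by
        rw [hcosarg, le_div_iff₀ habspos]
        linarith [hkey]
      by_contra hgt
      push_neg at hgt
      have := Real.strictAntiOn_cos ⟨hφ0, hφπ.le⟩ ⟨harg0, hargπ⟩ hgt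
      linarith
  have hu' : u = (s : ℂ) * Complex.exp ((α : ℂ) * Complex.I) := (Complex.norm_mul_exp_arg_mul_I u).symm
  have hv' : v = (ρ : ℂ) * Complex.exp ((β : ℂ) * Complex.I) := (Complex.norm_mul_exp_arg_mul_I v).symm
  have hζ2 : ζ = ((‖ζ‖ : ℝ) : ℂ) * Complex.exp ((Complex.arg ζ : ℂ) * Complex.I) :=
    (Complex.norm_mul_exp_arg_mul_I ζ).symm
  have hsum : u + v = ((‖ζ‖ : ℝ) : ℂ) * Complex.exp (((α + Complex.arg ζ : ℝ) : ℂ) * Complex.I) := by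
    have e1 : u + v = Complex.exp ((α : ℂ) * Complex.I) * ζ := by
      rw [hu', hv', hζdef]
      have e2 : Complex.exp ((α:ℂ) * Complex.I) * Complex.exp ((φ:ℂ) * Complex.I)
          = Complex.exp ((β:ℂ) * Complex.I) := by
        rw [← Complex.exp_add]
        congr 1
        rw [hφdef]
        push_cast
        ring
      calc (s:ℂ) * Complex.exp ((α:ℂ)*Complex.I) + (ρ:ℂ) * Complex.exp ((β:ℂ)*Complex.I)
          = (s:ℂ) * Complex.exp ((α:ℂ)*Complex.I)
            + (ρ:ℂ) * (Complex.exp ((α:ℂ)*Complex.I) * Complex.exp ((φ:ℂ)*Complex.I)) := by rw [e2]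
        _ = Complex.exp ((α:ℂ)*Complex.I) * ((s:ℂ) + (ρ:ℂ) * Complex.exp ((φ:ℂ)*Complex.I)) := by ring
    rw [e1]
    conv_lhs => rw [hζ2]
    rw [Complex.ofReal_add, add_mul, Complex.exp_add]
    ring
  have hmem : α + Complex.arg ζ ∈ Set.Ioc (-Real.pi) Real.pi := by
    constructor
    · linarith
    · have : α + φ = β := by rw [hφdef]; ring
      linarith
  have harg_sum : Complex.arg (u + v) = α + Complex.arg ζ := by
    rw [hsum, Complex.exp_mul_I]
    exact Complex.arg_mul_cos_add_sin_mul_I (norm_pos_iff.mpr hζne) hmem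
  refine ⟨?_, ?_, ?_⟩
  · rw [hsum]
    exact mul_ne_zero (Complex.ofReal_ne_zero.2 (norm_pos_iff.mpr hζne).ne') (Complex.exp_ne_zero _)
  · rw [harg_sum]; linarith
  · rw [harg_sum]
    have : α + φ = β := by rw [hφdef]; ring
    linarith

lemma SA.add_ray_mem_openSector {R₀ ρ a'' b'' θ₀ : ℝ} (hpa : -Real.pi < a'') (hpb : b'' < Real.pi)
    (hθa : a'' < θ₀) (hθb : θ₀ < b'') (h1 : b'' - θ₀ < Real.pi) (h2 : θ₀ - a'' < Real.pi)
    (hρ : 0 < ρ) {z : ℂ} (hz : z ∈ openSector R₀ a'' b'') :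
    z + (ρ : ℂ) * Complex.exp ((θ₀ : ℂ) * Complex.I) ∈ openSector (R₀ + ρ) a'' b'' := by
  obtain ⟨hz0, hzR, hza, hzb⟩ := hz
  set w : ℂ := (ρ : ℂ) * Complex.exp ((θ₀ : ℂ) * Complex.I) with hwdef
  have hw0 : w ≠ 0 := mul_ne_zero (Complex.ofReal_ne_zero.2 hρ.ne') (Complex.exp_ne_zero _)
  have hargw : Complex.arg w = θ₀ := by
    rw [hwdef, Complex.arg_real_mul _ hρ, SA.arg_exp_mul_I (by linarith) (by linarith)]
  have habsw : ‖w‖ = ρ := by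
    rw [hwdef, norm_mul, Complex.norm_exp_ofReal_mul_I, Complex.norm_of_nonneg hρ.le, mul_one]
  have habs : ‖z + w‖ < R₀ + ρ := by
    calc ‖z + w‖ ≤ ‖z‖ + ‖w‖ := norm_add_le _ _
      _ < R₀ + ρ := by rw [habsw]; linarith
  rcases le_total (Complex.arg z) θ₀ with hle | hle
  · obtain ⟨hne, hlow, hhigh⟩ := SA.arg_add_between hz0 hw0
      (by rw [hargw]; exact hle) (by rw [hargw]; linarith) (by linarith) (by rw [hargw]; linarith)
    exact ⟨hne, habs, lt_of_lt_of_le hza hlow, lt_of_le_of_lt hhigh (by rw [hargw]; exact hθb)⟩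
  · obtain ⟨hne, hlow, hhigh⟩ := SA.arg_add_between hw0 hz0
      (by rw [hargw]; exact hle) (by rw [hargw]; linarith) (by rw [hargw]; linarith) (by linarith)
    rw [add_comm] at hne hlow hhigh
    exact ⟨hne, habs, lt_of_lt_of_le (by rw [hargw] at hlow ⊢; linarith) hlow |>.trans_le le_rfl,
      lt_of_le_of_lt hhigh hzb⟩

-- norm of a 1-dim-domain multilinear map is attained at ones
lemma SA.onedim_opNorm_le (j : ℕ) (f : ContinuousMultilinearMap ℂ (fun _ : Fin j => ℂ) ℂ) :
    ‖f‖ ≤ ‖f (fun _ => 1)‖ := by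
  refine ContinuousMultilinearMap.opNorm_le_bound (norm_nonneg _) fun m => ?_
  have h1 : f m = (∏ i, m i) • f (fun _ => 1) := by
    have h2 : (fun i => (m i) • (1:ℂ)) = m := by funext i; simp
    rw [← f.map_smul_univ (fun i => m i) (fun _ => (1:ℂ)), h2]
  rw [h1, norm_smul, norm_prod]
  rw [mul_comm]

-- the affine section map t ↦ (t, τ) has all iterated derivatives of norm ≤ 1
lemma SA.aff_bound (τ : ℝ) (i : ℕ) (hi : 1 ≤ i) (t : ℝ) :
    ‖iteratedFDeriv ℝ i (fun t : ℝ => ((t, τ) : ℝ × ℝ)) t‖ ≤ 1 := by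
  have hf : ∀ y : ℝ, HasFDerivAt (fun t : ℝ => ((t, τ) : ℝ × ℝ))
      (ContinuousLinearMap.inl ℝ ℝ ℝ) y := by
    intro y
    have h := ((ContinuousLinearMap.inl ℝ ℝ ℝ).hasFDerivAt (x := y)).add_const ((0, τ) : ℝ × ℝ)
    exact h.congr_of_eventuallyEq (Filter.Eventually.of_forall fun x => by
      simp [Prod.ext_iff, ContinuousLinearMap.inl_apply, Prod.mk_add_mk])
  match i, hi with
  | 1, _ =>
    refine ContinuousMultilinearMap.opNorm_le_bound zero_le_one fun m => ?_
    rw [iteratedFDeriv_one_apply, (hf t).fderiv]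
    simp [ContinuousLinearMap.inl_apply, Prod.norm_def]
  | (n+2), _ =>
    refine ContinuousMultilinearMap.opNorm_le_bound zero_le_one fun m => ?_
    have hz : iteratedFDeriv ℝ (n+2) (fun t : ℝ => ((t, τ) : ℝ × ℝ)) t m = 0 := by
      rw [iteratedFDeriv_succ_apply_right]
      have hfd : (fderiv ℝ (fun t : ℝ => ((t, τ) : ℝ × ℝ)))
          = fun _ => ContinuousLinearMap.inl ℝ ℝ ℝ := funext fun y => (hf y).fderiv
      rw [hfd, iteratedFDeriv_const_of_ne (Nat.succ_ne_zero n)]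
      simp
    rw [hz]
    simp
    positivity

-- uniform bound for finitely many continuous functions on a compact set
lemma SA.exists_uniform_bound {α : Type*} [TopologicalSpace α] {K : Set α} (hK : IsCompact K)
    (N : ℕ) (f : ℕ → α → ℝ) (hf : ∀ i, i ≤ N → ContinuousOn (f i) K) :
    ∃ B : ℝ, 1 ≤ B ∧ ∀ i, i ≤ N → ∀ x ∈ K, f i x ≤ B := by
  induction N with
  | zero =>
    obtain ⟨C, hC⟩ := hK.exists_bound_of_continuousOn (hf 0 le_rfl)
    refine ⟨max C 1, le_max_right _ _, fun i hi x hx => ?_⟩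
    interval_cases i
    exact le_trans (le_trans (le_abs_self _) (hC x hx)) (le_max_left _ _)
  | succ n IH =>
    obtain ⟨B₁, hB₁, h1⟩ := IH (fun i hi => hf i (hi.trans (Nat.le_succ n)))
    obtain ⟨C, hC⟩ := hK.exists_bound_of_continuousOn (hf (n+1) le_rfl)
    refine ⟨max B₁ C, le_trans hB₁ (le_max_left _ _), fun i hi x hx => ?_⟩
    rcases eq_or_lt_of_le hi with h | h
    · subst h
      exact le_trans (le_trans (le_abs_self _) (hC x hx)) (le_max_right _ _)
    · exact le_trans (h1 i (Nat.lt_succ_iff.1 h) x hx) (le_max_left _ _)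

-- iterated derivatives of analytic functions are analytic
lemma SA.analyticOnNhd_iteratedDeriv {f : ℂ → ℂ} {U : Set ℂ}
    (hf : AnalyticOnNhd ℂ f U) : ∀ j : ℕ, AnalyticOnNhd ℂ (iteratedDeriv j f) U := by
  intro j
  induction j with
  | zero => simpa [iteratedDeriv_zero] using hf
  | succ n IH => rw [iteratedDeriv_succ]; exact IH.deriv

-- iterated derivative of a rotated analytic function
lemma SA.iteratedDeriv_comp_mul_const {f : ℂ → ℂ} {U : Set ℂ} (hU : IsOpen U)
    (hf : AnalyticOnNhd ℂ f U) (c : ℂ) (j : ℕ) {ζ : ℂ} (hζ : ζ * c ∈ U) :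
    iteratedDeriv j (fun ξ : ℂ => f (ξ * c)) ζ = c ^ j * iteratedDeriv j f (ζ * c) := by
  induction j generalizing ζ with
  | zero => simp
  | succ n IH =>
    rw [iteratedDeriv_succ]
    have hV : IsOpen {ξ : ℂ | ξ * c ∈ U} := hU.preimage (continuous_mul_right c)
    have hev : iteratedDeriv n (fun ξ : ℂ => f (ξ * c))
        =ᶠ[𝓝 ζ] fun ξ => c ^ n * iteratedDeriv n f (ξ * c) := by
      filter_upwards [hV.mem_nhds hζ] with ξ hξ
      exact IH hξ
    rw [hev.deriv_eq]
    have hd : HasDerivAt (fun ξ : ℂ => iteratedDeriv n f (ξ * c))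
        (iteratedDeriv (n+1) f (ζ * c) * c) ζ := by
      have houter : HasDerivAt (iteratedDeriv n f) (iteratedDeriv (n+1) f (ζ * c)) (ζ * c) := by
        have := (SA.analyticOnNhd_iteratedDeriv hf n (ζ * c) hζ).differentiableAt.hasDerivAt
        rwa [← iteratedDeriv_succ] at this
      have hinner : HasDerivAt (fun ξ : ℂ => ξ * c) c ζ := by
        simpa using (hasDerivAt_id ζ).mul_const c
      exact houter.comp ζ hinner
    rw [(hd.const_mul (c ^ n)).deriv]
    ring

-- iterated derivative of the restriction of an analytic function to the real axis
lemma SA.iteratedDeriv_comp_ofReal {v : ℂ → ℂ} {U : Set ℂ} (hU : IsOpen U)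
    (hv : AnalyticOnNhd ℂ v U) (j : ℕ) {s : ℝ} (hs : (s : ℂ) ∈ U) :
    iteratedDeriv j (fun t : ℝ => v (t : ℂ)) s = iteratedDeriv j v (s : ℂ) := by
  induction j generalizing s with
  | zero => simp
  | succ n IH =>
    rw [iteratedDeriv_succ, iteratedDeriv_succ]
    have hV : IsOpen {t : ℝ | (t : ℂ) ∈ U} := hU.preimage Complex.continuous_ofReal
    have hev : iteratedDeriv n (fun t : ℝ => v (t : ℂ))
        =ᶠ[𝓝 s] fun t : ℝ => iteratedDeriv n v (t : ℂ) := by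
      filter_upwards [hV.mem_nhds hs] with t ht
      exact IH ht
    rw [hev.deriv_eq]
    have hd : HasDerivAt (fun t : ℝ => iteratedDeriv n v (t : ℂ))
        (deriv (iteratedDeriv n v) (s : ℂ)) s :=
      ((SA.analyticOnNhd_iteratedDeriv hv n (s : ℂ) hs).differentiableAt.hasDerivAt).comp_ofReal
    rw [hd.deriv]

-- the real iterated derivative within an open set, of a holomorphic function, is bounded by
-- the complex iterated derivative
lemma SA.norm_iteratedFDerivWithin_le_iteratedDeriv {f : ℂ → ℂ} {U : Set ℂ} (hU : IsOpen U)
    (hf : DifferentiableOn ℂ f U) (j : ℕ) {x : ℂ} (hx : x ∈ U) :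
    ‖iteratedFDerivWithin ℝ j f U x‖ ≤ ‖iteratedDeriv j f x‖ := by
  have hcd : ContDiffOn ℂ (j : ℕ) f U := hf.contDiffOn hU
  have hser := (hcd.ftaylorSeriesWithin hU.uniqueDiffOn).restrictScalars ℝ
  have heq := hser.eq_iteratedFDerivWithin_of_uniqueDiffOn (m := j)
    (by exact_mod_cast le_rfl) hU.uniqueDiffOn hx
  rw [← heq]
  have h1 : ‖(ftaylorSeriesWithin ℂ f U x).restrictScalars ℝ j‖
      = ‖ftaylorSeriesWithin ℂ f U x j‖ := by
    exact ContinuousMultilinearMap.norm_restrictScalars _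
  rw [h1]
  have h2 : ‖ftaylorSeriesWithin ℂ f U x j‖ ≤ ‖ftaylorSeriesWithin ℂ f U x j (fun _ => 1)‖ := by
    apply ContinuousMultilinearMap.opNorm_le_bound (norm_nonneg _)
    intro m
    have h3 : ftaylorSeriesWithin ℂ f U x j m
        = (∏ i, m i) • ftaylorSeriesWithin ℂ f U x j (fun _ => 1) := by
      have h4 : (fun i => (m i) • (1:ℂ)) = m := by funext i; simp
      rw [← (ftaylorSeriesWithin ℂ f U x j).map_smul_univ (fun i => m i) (fun _ => (1:ℂ)), h4]
    rw [h3, norm_smul, norm_prod, mul_comm]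
  refine h2.trans (le_of_eq ?_)
  have h5 : ftaylorSeriesWithin ℂ f U x j = iteratedFDerivWithin ℂ j f U x := rfl
  rw [h5, iteratedFDerivWithin_of_isOpen j hU hx, ← iteratedDeriv_eq_iteratedFDeriv]




/-- Claim Dc:claim2: a holomorphic function on a sector which is `C^{k+2}` up
to the boundary circle of the real blow-up can be approximated, in `C^k`-norm
on slightly smaller sectors, by holomorphic functions `C^∞` up to the
boundary. -/
theorem holomorphic_Ck_approximation_on_sector
    (R a b : ℝ) (hR : 0 < R) (ha : -Real.pi < a) (hab : a < b)
    (hb : b < Real.pi) (k : ℕ) (h : ℂ → ℂ)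
    (hd : DifferentiableOn ℂ h (openSector R a b))
    (H : ℝ × ℝ → ℂ)
    (hH : ContDiffOn ℝ (k + 2 : ℕ) H (Set.Ico 0 R ×ˢ Set.Ioo a b))
    (hHh : ∀ r θ : ℝ, 0 < r → r < R → a < θ → θ < b →
      H (r, θ) = h ((r : ℂ) * Complex.exp ((θ : ℂ) * Complex.I))) :
    ∀ a' b' R' ε : ℝ, a < a' → a' < b' → b' < b → 0 < R' → R' < R → 0 < ε →
      ∃ a'' b'' R'' : ℝ, a < a'' ∧ a'' < a' ∧ b' < b'' ∧ b'' < b ∧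
        R' < R'' ∧ R'' < R ∧
      ∃ g : ℂ → ℂ, DifferentiableOn ℂ g (openSector R'' a'' b'') ∧
      ∃ G : ℝ × ℝ → ℂ,
        ContDiffOn ℝ (⊤ : ℕ∞) G (Set.Ico 0 R'' ×ˢ Set.Ioo a'' b'') ∧
        (∀ r θ : ℝ, 0 < r → r < R'' → a'' < θ → θ < b'' →
          G (r, θ) = g ((r : ℂ) * Complex.exp ((θ : ℂ) * Complex.I))) ∧
        ∀ m : ℕ, m ≤ k → ∀ x ∈ Set.Icc (0 : ℝ) R' ×ˢ Set.Icc a' b',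
          ‖iteratedFDerivWithin ℝ m (fun p => H p - G p)
            (Set.Ico 0 R'' ×ˢ Set.Ioo a'' b'') x‖ ≤ ε := by
  intro a' b' R' ε ha' hab' hb' hR'0 hR'R hε
  set d : ℝ := (R - R') / 8 with hd_def
  have hdpos : 0 < d := by rw [hd_def]; linarith
  have h8d : R' + 8*d = R := by rw [hd_def]; ring
  set a'' : ℝ := (a + a') / 2 with ha''def
  set b'' : ℝ := (b' + b) / 2 with hb''def
  set R'' : ℝ := R' + d with hR''def
  set θ₀ : ℝ := (a'' + b'') / 2 with hθ₀def
  have haa : a < a'' := by rw [ha''def]; linarith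
  have haa' : a'' < a' := by rw [ha''def]; linarith
  have hbb' : b' < b'' := by rw [hb''def]; linarith
  have hbb : b'' < b := by rw [hb''def]; linarith
  have hRR' : R' < R'' := by rw [hR''def]; linarith
  have hR''R : R'' < R := by rw [hR''def, hd_def]; linarith
  have ha''b'' : a'' < b'' := by linarith
  have hπa'' : -Real.pi < a'' := lt_trans ha haa
  have hπb'' : b'' < Real.pi := lt_trans hbb hb
  have hθ₀a : a'' < θ₀ := by rw [hθ₀def]; linarith
  have hθ₀b : θ₀ < b'' := by rw [hθ₀def]; linarith
  have hw1 : b'' - θ₀ < Real.pi := by rw [hθ₀def]; linarith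
  have hw2 : θ₀ - a'' < Real.pi := by rw [hθ₀def]; linarith
  set Ω := openSector R a b with hΩdef
  have hΩo : IsOpen Ω := SA.isOpen_openSector hb.le
  have hAN : AnalyticOnNhd ℂ h Ω := hd.analyticOnNhd hΩo
  set s₀ := Set.Ico (0:ℝ) R ×ˢ Set.Ioo a b with hs₀def
  set W := Set.Ioo (0:ℝ) R ×ˢ Set.Ioo a b with hWdef
  have hWo : IsOpen W := isOpen_Ioo.prod isOpen_Ioo
  have hWs₀ : W ⊆ s₀ := Set.prod_mono Set.Ioo_subset_Ico_self subset_rfl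
  set R₅ : ℝ := R' + 5*d with hR₅def
  have hR₅R : R₅ < R := by rw [hR₅def, hd_def]; linarith
  set Q := Set.Icc (0:ℝ) R₅ ×ˢ Set.Icc a'' b'' with hQdef
  have hQcompact : IsCompact Q := isCompact_Icc.prod isCompact_Icc
  have hQs₀ : Q ⊆ s₀ := Set.prod_mono
    (fun t ht => ⟨ht.1, lt_of_le_of_lt ht.2 hR₅R⟩)
    (fun t ht => ⟨lt_of_lt_of_le haa ht.1, lt_of_le_of_lt ht.2 hbb⟩)
  have hs₀u : UniqueDiffOn ℝ s₀ := uniqueDiffOn_convex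
    ((convex_Ico _ _).prod (convex_Ioo _ _))
    (by rw [interior_prod_eq, interior_Ico, interior_Ioo]
        exact (Set.nonempty_Ioo.2 hR).prod (Set.nonempty_Ioo.2 hab))
  obtain ⟨B, hB1, hB⟩ := SA.exists_uniform_bound hQcompact (k+1)
    (fun j x => ‖iteratedFDerivWithin ℝ j H s₀ x‖)
    (fun j hj => ((hH.continuousOn_iteratedFDerivWithin
      (by exact_mod_cast (by omega : j ≤ k+2)) hs₀u).mono hQs₀).norm)
  set E1 : ℝ := (k+1).factorial * B with hE1def
  have hfact1 : (1:ℝ) ≤ (k+1).factorial := by exact_mod_cast Nat.one_le_iff_ne_zero.2 (Nat.factorial_pos (k+1)).ne'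
  have hE1 : 1 ≤ E1 := by rw [hE1def]; nlinarith
  -- uniform bound on complex iterated derivatives of h on a slightly smaller sector
  have hB' : ∀ j, j ≤ k + 1 → ∀ ζ ∈ openSector (R' + 4*d) a'' b'',
      ‖iteratedFDerivWithin ℝ j h Ω ζ‖ ≤ E1 := by
    intro j hj ζ hζmem
    obtain ⟨hζ0, hζR, hζa, hζb⟩ := hζmem
    have hζΩ : ζ ∈ Ω := SA.openSector_mono (by rw [hd_def]; linarith) haa.le hbb.le
      ⟨hζ0, hζR, hζa, hζb⟩
    have st1 := SA.norm_iteratedFDerivWithin_le_iteratedDeriv hΩo hd j hζΩ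
    set τ := Complex.arg ζ with hτdef
    set sζ := ‖ζ‖ with hsdef
    have hs0 : 0 < sζ := norm_pos_iff.mpr hζ0
    have hζeq : (sζ : ℂ) * Complex.exp ((τ:ℂ) * Complex.I) = ζ := Complex.norm_mul_exp_arg_mul_I ζ
    have hmemrot : (sζ : ℂ) * Complex.exp ((τ:ℂ) * Complex.I) ∈ Ω := by rw [hζeq]; exact hζΩ
    have hrot := SA.iteratedDeriv_comp_mul_const hΩo hAN (Complex.exp ((τ:ℂ)*Complex.I)) j
      (ζ := (sζ:ℂ)) hmemrot
    have habsc : ‖Complex.exp ((τ:ℂ)*Complex.I) ^ j‖ = 1 := by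
      rw [norm_pow, Complex.norm_exp_ofReal_mul_I, one_pow]
    have st2 : ‖iteratedDeriv j h ζ‖
        = ‖iteratedDeriv j (fun ξ : ℂ => h (ξ * Complex.exp ((τ:ℂ)*Complex.I))) (sζ:ℂ)‖ := by
      rw [hrot, norm_mul, habsc, one_mul, hζeq]
    have hVo : IsOpen {ξ : ℂ | ξ * Complex.exp ((τ:ℂ)*Complex.I) ∈ Ω} :=
      hΩo.preimage (continuous_mul_right _)
    have hALv : AnalyticOnNhd ℂ (fun ξ : ℂ => h (ξ * Complex.exp ((τ:ℂ)*Complex.I)))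
        {ξ : ℂ | ξ * Complex.exp ((τ:ℂ)*Complex.I) ∈ Ω} :=
      fun ξ hξ => by
        have hcmp := AnalyticAt.comp (g := h)
          (f := fun ξ : ℂ => ξ * Complex.exp ((τ:ℂ)*Complex.I)) (x := ξ)
          (hAN _ hξ) (analyticAt_id.mul analyticAt_const)
        exact hcmp
    have st3 := SA.iteratedDeriv_comp_ofReal hVo hALv j (s := sζ) hmemrot
    have hsR₅ : sζ ∈ Set.Ioo (0:ℝ) R₅ := ⟨hs0, by rw [hR₅def]; linarith⟩
    have st4 : iteratedDeriv j (fun t : ℝ => h ((t:ℂ) * Complex.exp ((τ:ℂ)*Complex.I))) sζ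
        = iteratedDeriv j (fun t : ℝ => H (t, τ)) sζ := by
      apply Filter.EventuallyEq.iteratedDeriv_eq
      filter_upwards [isOpen_Ioo.mem_nhds hsR₅] with t ht
      exact (hHh t τ ht.1 (lt_trans ht.2 hR₅R) (lt_trans haa hζa) (lt_trans hζb hbb)).symm
    have st5 : ‖iteratedDeriv j (fun t : ℝ => H (t, τ)) sζ‖
        ≤ ‖iteratedFDeriv ℝ j (fun t : ℝ => H (t, τ)) sζ‖ := by
      rw [iteratedDeriv_eq_iteratedFDeriv]
      calc ‖iteratedFDeriv ℝ j (fun t : ℝ => H (t, τ)) sζ (fun _ => (1:ℝ))‖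
          ≤ ‖iteratedFDeriv ℝ j (fun t : ℝ => H (t, τ)) sζ‖ * ∏ _i : Fin j, ‖(1:ℝ)‖ :=
            ContinuousMultilinearMap.le_opNorm _ _
        _ = ‖iteratedFDeriv ℝ j (fun t : ℝ => H (t, τ)) sζ‖ := by simp
    have st6 : iteratedFDeriv ℝ j (fun t : ℝ => H (t, τ)) sζ
        = iteratedFDerivWithin ℝ j (fun t : ℝ => H (t, τ)) (Set.Ioo 0 R₅) sζ :=
      (iteratedFDerivWithin_of_isOpen j isOpen_Ioo hsR₅).symm
    have hWmem : ((sζ, τ) : ℝ × ℝ) ∈ W :=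
      ⟨⟨hs0, lt_trans (by rw [hR₅def]; linarith : sζ < R₅) hR₅R⟩,
       lt_trans haa hζa, lt_trans hζb hbb⟩
    have st7 : ‖iteratedFDerivWithin ℝ j (H ∘ (fun t : ℝ => ((t, τ) : ℝ×ℝ)))
        (Set.Ioo 0 R₅) sζ‖ ≤ j.factorial * B * 1 ^ j := by
      apply norm_iteratedFDerivWithin_comp_le (N := ((k+2:ℕ) : WithTop ℕ∞))
        (hH.mono hWs₀) ((contDiff_id.prodMk contDiff_const).contDiffOn)
        (by exact_mod_cast (by omega : j ≤ k+2)) hWo.uniqueDiffOn isOpen_Ioo.uniqueDiffOn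
        (fun t ht => (⟨⟨ht.1, lt_trans ht.2 hR₅R⟩, lt_trans haa hζa, lt_trans hζb hbb⟩ :
          ((t, τ) : ℝ × ℝ) ∈ W)) hsR₅
      · intro i hi
        simp only [id_eq]
        have hrw : iteratedFDerivWithin ℝ i H W ((sζ, τ)) = iteratedFDerivWithin ℝ i H s₀ ((sζ, τ)) := by
          rw [← iteratedFDerivWithin_inter_open (s := s₀) hWo hWmem,
            inter_eq_self_of_subset_right hWs₀]
        rw [hrw]
        exact hB i (le_trans hi hj) _
          ⟨⟨hs0.le, (by rw [hR₅def]; linarith : sζ ≤ R₅)⟩, hζa.le, hζb.le⟩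
      · intro i hi1 hij
        rw [iteratedFDerivWithin_of_isOpen i isOpen_Ioo hsR₅, one_pow]
        exact SA.aff_bound τ i hi1 sζ
    have st7' : ‖iteratedFDerivWithin ℝ j (fun t : ℝ => H (t, τ)) (Set.Ioo 0 R₅) sζ‖
        ≤ j.factorial * B := by
      have h9 := st7
      simp only [one_pow, mul_one] at h9
      exact h9
    have hfle : (j.factorial : ℝ) ≤ (k+1).factorial := by
      exact_mod_cast Nat.factorial_le hj
    calc ‖iteratedFDerivWithin ℝ j h Ω ζ‖ ≤ ‖iteratedDeriv j h ζ‖ := st1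
      _ = ‖iteratedDeriv j (fun t : ℝ => H (t, τ)) sζ‖ := by rw [st2, ← st3, st4]
      _ ≤ ‖iteratedFDeriv ℝ j (fun t : ℝ => H (t, τ)) sζ‖ := st5
      _ = ‖iteratedFDerivWithin ℝ j (fun t : ℝ => H (t, τ)) (Set.Ioo 0 R₅) sζ‖ := by rw [st6]
      _ ≤ j.factorial * B := st7'
      _ ≤ E1 := by rw [hE1def]; nlinarith
  -- the polar-coordinates map and a bound on its derivatives
  set eP : ℝ × ℝ → ℂ := fun p => (p.1 : ℂ) * Complex.exp ((p.2:ℂ) * Complex.I) with hePdef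
  have heC : ContDiff ℝ ((⊤:ℕ∞) : WithTop ℕ∞) eP := by
    apply ContDiff.mul
    · exact Complex.ofRealCLM.contDiff.comp contDiff_fst
    · exact ((Complex.ofRealCLM.contDiff.comp contDiff_snd).mul contDiff_const).cexp
  obtain ⟨D, hD1, hD⟩ := SA.exists_uniform_bound
    (isCompact_Icc.prod isCompact_Icc :
      IsCompact (Set.Icc (0:ℝ) R'' ×ˢ Set.Icc a'' b'')) k
    (fun i x => ‖iteratedFDeriv ℝ i eP x‖)
    (fun i hi => (heC.continuous_iteratedFDeriv (by exact_mod_cast le_top)).continuousOn.norm)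
  -- choice of the small translation parameter
  set ρ : ℝ := min d (ε / (k.factorial * E1 * D ^ k)) with hρdef
  have hρpos : 0 < ρ := lt_min hdpos (div_pos hε (by positivity))
  have hρd : ρ ≤ d := min_le_left _ _
  set w : ℂ := (ρ:ℂ) * Complex.exp ((θ₀:ℂ) * Complex.I) with hwdef
  have hw_norm : ‖w‖ = ρ := by
    rw [hwdef, norm_mul,
      Complex.norm_exp_ofReal_mul_I, Complex.norm_of_nonneg hρpos.le, mul_one]
  have hwΩ : w ∈ Ω := by
    rw [hwdef, hΩdef]
    exact SA.mem_openSector_polar hρpos (by linarith [h8d, hdpos, hρd, hR'0])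
      (lt_trans haa hθ₀a) (lt_trans hθ₀b hbb) ha hb.le
  have hsmul : ∀ t : ℝ, t • w = ((t*ρ : ℝ) : ℂ) * Complex.exp ((θ₀:ℂ) * Complex.I) := by
    intro t
    rw [hwdef, Complex.real_smul]
    push_cast
    ring
  -- the approximating function
  set g : ℂ → ℂ := fun z => h (z + w) with hgdef
  set G : ℝ × ℝ → ℂ := fun p => g ((p.1 : ℂ) * Complex.exp ((p.2:ℂ) * Complex.I)) with hGdef
  -- basic sector inclusions
  have hmonoΩ : ∀ σ : ℝ, σ ≤ 4*d → openSector (R' + σ) a'' b'' ⊆ Ω :=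
    fun σ hσ => SA.openSector_mono (by linarith [h8d, hdpos]) haa.le hbb.le
  have hKEY : ∀ {R₀ : ℝ} {z : ℂ}, z ∈ openSector R₀ a'' b'' → ∀ {σ : ℝ}, 0 < σ →
      z + (σ:ℂ) * Complex.exp ((θ₀:ℂ) * Complex.I) ∈ openSector (R₀ + σ) a'' b'' := by
    intro R₀ z hz σ hσ
    exact SA.add_ray_mem_openSector hπa'' hπb'' hθ₀a hθ₀b hw1 hw2 hσ hz
  -- g is holomorphic on the sector
  have hGdiff : DifferentiableOn ℂ g (openSector R'' a'' b'') := by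
    intro z hz
    have hzw : z + w ∈ Ω := hmonoΩ (d + ρ) (by linarith)
      (by rw [hR''def] at hz; simpa [add_assoc] using hKEY hz hρpos)
    exact (((hAN _ hzw).differentiableAt).comp z
      ((differentiableAt_id).add_const w)).differentiableWithinAt
  -- G is smooth up to the boundary
  have hGsmooth : ContDiffOn ℝ (⊤ : ℕ∞) G (Set.Ico 0 R'' ×ˢ Set.Ioo a'' b'') := by
    intro x hx
    have hmem : eP x + w ∈ Ω := by
      rcases eq_or_lt_of_le hx.1.1 with h0 | hpos
      · have hx0 : eP x = 0 := by rw [hePdef]; simp [← h0]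
        rw [hx0, zero_add]; exact hwΩ
      · have hxs : eP x ∈ openSector R'' a'' b'' :=
          SA.mem_openSector_polar hpos hx.1.2 hx.2.1 hx.2.2 hπa'' hπb''.le
        rw [hR''def] at hxs
        exact hmonoΩ (d + ρ) (by linarith) (by simpa [add_assoc] using hKEY hxs hρpos)
    have hhx : AnalyticAt ℝ h (eP x + w) := (hAN _ hmem).restrictScalars
    have hA1 : AnalyticAt ℝ (fun p : ℝ×ℝ => (p.1:ℂ)) x :=
      (Complex.ofRealCLM.analyticAt _).comp analyticAt_fst
    have hA2 : AnalyticAt ℝ (fun p : ℝ×ℝ => (p.2:ℂ) * Complex.I) x :=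
      ((Complex.ofRealCLM.analyticAt _).comp analyticAt_snd).mul analyticAt_const
    have hA3 : AnalyticAt ℝ (fun p : ℝ×ℝ => Complex.exp ((p.2:ℂ) * Complex.I)) x :=
      (analyticAt_cexp.restrictScalars).comp hA2
    have hι : AnalyticAt ℝ (fun p : ℝ×ℝ => (p.1:ℂ) * Complex.exp ((p.2:ℂ)*Complex.I) + w) x :=
      (hA1.mul hA3).add analyticAt_const
    have hcmp := AnalyticAt.comp (g := h)
      (f := fun p : ℝ×ℝ => (p.1:ℂ) * Complex.exp ((p.2:ℂ)*Complex.I) + w) (x := x) hhx hι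
    exact (hcmp.contDiffAt).contDiffWithinAt
  refine ⟨a'', b'', R'', haa, haa', hbb', hbb, hRR', hR''R, g, hGdiff, G, hGsmooth,
    fun r θ _ _ _ _ => rfl, ?_⟩
  -- the quantitative estimate
  set s'' := Set.Ico (0:ℝ) R'' ×ˢ Set.Ioo a'' b'' with hs''def
  set V := Set.Ioo (0:ℝ) R'' ×ˢ Set.Ioo a'' b'' with hVdef
  have hVo : IsOpen V := isOpen_Ioo.prod isOpen_Ioo
  have hVs'' : V ⊆ s'' := Set.prod_mono Set.Ioo_subset_Ico_self subset_rfl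
  set T := openSector (R' + 2*d) a'' b'' with hTdef
  have hTo : IsOpen T := SA.isOpen_openSector hπb''.le
  have hTΩ : T ⊆ Ω := hmonoΩ (2*d) (by linarith)
  have hTwΩ : ∀ ζ ∈ T, ζ + w ∈ Ω := by
    intro ζ hζ
    have := hKEY hζ hρpos
    exact hmonoΩ (2*d + ρ) (by linarith) (by simpa [add_assoc] using this)
  set Φ : ℂ → ℂ := fun z => h z - h (z + w) with hΦdef
  have hcdh : ContDiffOn ℝ ((k+1:ℕ) : WithTop ℕ∞) h Ω :=
    ContDiffOn.restrict_scalars ℝ (hd.contDiffOn hΩo)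
  have hp : HasFTaylorSeriesUpToOn ((k+1:ℕ) : WithTop ℕ∞) h (ftaylorSeriesWithin ℝ h Ω) Ω :=
    hcdh.ftaylorSeriesWithin hΩo.uniqueDiffOn
  have hq : HasFTaylorSeriesUpToOn ((k+1:ℕ) : WithTop ℕ∞) Φ
      (fun z n => ftaylorSeriesWithin ℝ h Ω z n - ftaylorSeriesWithin ℝ h Ω (z + w) n) T := by
    refine ⟨?_, ?_, ?_⟩
    · intro z hz
      have h1 := hp.zero_eq z (hTΩ hz)
      have h2 := hp.zero_eq (z + w) (hTwΩ z hz)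
      show (ftaylorSeriesWithin ℝ h Ω z 0 - ftaylorSeriesWithin ℝ h Ω (z+w) 0).curry0 = Φ z
      rw [ContinuousMultilinearMap.curry0_apply, ContinuousMultilinearMap.sub_apply,
        ← ContinuousMultilinearMap.curry0_apply, ← ContinuousMultilinearMap.curry0_apply,
        h1, h2]
    · intro m' hm' z hz
      have h1 := (hp.fderivWithin m' hm' z (hTΩ hz)).mono hTΩ
      have h2 := hp.fderivWithin m' hm' (z + w) (hTwΩ z hz)
      have htr : HasFDerivWithinAt (fun y : ℂ => y + w) (ContinuousLinearMap.id ℝ ℂ) T z :=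
        ((hasFDerivAt_id (𝕜 := ℝ) z).add_const w).hasFDerivWithinAt
      have h2' := HasFDerivWithinAt.comp z h2 htr (fun y hy => hTwΩ y hy)
      have h3 := h1.sub h2'
      exact h3.congr_fderiv (by ext y v; simp)
    · intro m' hm'
      have c1 := (hp.cont m' hm').mono hTΩ
      have c2 : ContinuousOn (fun z => ftaylorSeriesWithin ℝ h Ω (z + w) m') T :=
        (hp.cont m' hm').comp ((continuous_id.add continuous_const).continuousOn)
          (fun y hy => hTwΩ y hy)
      exact c1.sub c2
  -- smallness of the derivatives of Φ on T
  have hC2 : ∀ i, i ≤ k → ∀ ζ ∈ T, ‖iteratedFDerivWithin ℝ i Φ T ζ‖ ≤ ρ * E1 := by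
    intro i hi ζ hζ
    have heq := (hq.eq_iteratedFDerivWithin_of_uniqueDiffOn (m := i)
        (by exact_mod_cast Nat.le_succ_of_le hi) hTo.uniqueDiffOn hζ).symm
    rw [heq]
    have hseg : segment ℝ ζ (ζ + w) ⊆ openSector (R' + 4*d) a'' b'' := by
      intro y hy
      rw [segment_eq_image'] at hy
      obtain ⟨t, ht, rfl⟩ := hy
      rw [add_sub_cancel_left]
      show ζ + t • w ∈ openSector (R' + 4*d) a'' b''
      rcases eq_or_lt_of_le ht.1 with h0 | hpos
      · rw [← h0, zero_smul, add_zero]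
        exact SA.openSector_mono (by linarith) le_rfl le_rfl hζ
      · rw [hsmul t]
        have hmem := hKEY hζ (mul_pos hpos hρpos)
        refine SA.openSector_mono ?_ le_rfl le_rfl hmem
        have : t * ρ ≤ ρ := mul_le_of_le_one_left hρpos.le ht.2
        linarith
    have hsegΩ : segment ℝ ζ (ζ + w) ⊆ Ω := subset_trans hseg (hmonoΩ (4*d) le_rfl)
    have hF : ∀ y ∈ segment ℝ ζ (ζ + w),
        HasFDerivWithinAt (fun z => ftaylorSeriesWithin ℝ h Ω z i)
        ((ftaylorSeriesWithin ℝ h Ω y (i+1)).curryLeft) (segment ℝ ζ (ζ + w)) y := by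
      intro y hy
      exact (hp.fderivWithin i (by exact_mod_cast Nat.lt_succ_of_le hi) y (hsegΩ hy)).mono hsegΩ
    have hbound : ∀ y ∈ segment ℝ ζ (ζ + w),
        ‖(ftaylorSeriesWithin ℝ h Ω y (i+1)).curryLeft‖ ≤ E1 := by
      intro y hy
      rw [ContinuousMultilinearMap.curryLeft_norm]
      exact hB' (i+1) (by omega) y (hseg hy)
    have hMVT := (convex_segment ζ (ζ + w)).norm_image_sub_le_of_norm_hasFDerivWithin_le hF hbound
      (left_mem_segment ℝ ζ (ζ + w)) (right_mem_segment ℝ ζ (ζ + w))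
    rw [add_sub_cancel_left, hw_norm] at hMVT
    calc ‖ftaylorSeriesWithin ℝ h Ω ζ i - ftaylorSeriesWithin ℝ h Ω (ζ + w) i‖
        = ‖ftaylorSeriesWithin ℝ h Ω (ζ + w) i - ftaylorSeriesWithin ℝ h Ω ζ i‖ :=
          norm_sub_rev _ _
      _ ≤ E1 * ρ := hMVT
      _ = ρ * E1 := mul_comm _ _
  intro m hm x hx
  -- interior bound
  have hVbound : ∀ y ∈ V, ‖iteratedFDerivWithin ℝ m (fun p => H p - G p) s'' y‖ ≤ ε := by
    intro y hy
    have hrw1 : iteratedFDerivWithin ℝ m (fun p => H p - G p) s'' y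
        = iteratedFDerivWithin ℝ m (fun p => H p - G p) V y := by
      rw [← iteratedFDerivWithin_inter_open (s := s'') hVo hy,
        inter_eq_self_of_subset_right hVs'']
    have hrw2 : iteratedFDerivWithin ℝ m (fun p => H p - G p) V y
        = iteratedFDerivWithin ℝ m (Φ ∘ eP) V y := by
      apply iteratedFDerivWithin_congr _ hy
      intro p hp
      have hHp : H p = h (eP p) := by
        have := hHh p.1 p.2 hp.1.1 (lt_trans hp.1.2 hR''R)
          (lt_trans haa hp.2.1) (lt_trans hp.2.2 hbb)
        rw [hePdef]
        exact this
      show H p - G p = Φ (eP p)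
      rw [hΦdef, hHp]
    rw [hrw1, hrw2]
    have hmaps : Set.MapsTo eP V T := by
      intro p hp
      have : eP p ∈ openSector R'' a'' b'' :=
        SA.mem_openSector_polar hp.1.1 hp.1.2 hp.2.1 hp.2.2 hπa'' hπb''.le
      exact SA.openSector_mono (by rw [hR''def]; linarith) le_rfl le_rfl this
    have hΦcd : ContDiffOn ℝ ((k+1:ℕ) : WithTop ℕ∞) Φ T := by
      intro z hz
      have h1 : ContDiffAt ℝ ((k+1:ℕ) : WithTop ℕ∞) h z :=
        ((hAN _ (hTΩ hz)).restrictScalars).contDiffAt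
      have h2 : ContDiffAt ℝ ((k+1:ℕ) : WithTop ℕ∞) (fun z : ℂ => h (z + w)) z := by
        have h3 : ContDiffAt ℝ ((k+1:ℕ) : WithTop ℕ∞) h (z + w) :=
          ((hAN _ (hTwΩ z hz)).restrictScalars).contDiffAt
        exact h3.comp z ((contDiffAt_id).add contDiffAt_const)
      exact (h1.sub h2).contDiffWithinAt
    have hePcd : ContDiffOn ℝ ((k+1:ℕ) : WithTop ℕ∞) eP V :=
      (heC.of_le (by exact_mod_cast le_top)).contDiffOn
    have hcomp := norm_iteratedFDerivWithin_comp_le (𝕜 := ℝ) (g := Φ) (f := eP) (n := m)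
        (N := ((k+1:ℕ) : WithTop ℕ∞)) hΦcd hePcd
        (by exact_mod_cast (by omega : m ≤ k+1)) hTo.uniqueDiffOn hVo.uniqueDiffOn
        hmaps hy (C := ρ * E1) (D := D)
        (fun i hi => hC2 i (hi.trans hm) _ (hmaps hy))
        (by
          intro i hi1 him
          rw [iteratedFDerivWithin_of_isOpen i hVo hy]
          calc ‖iteratedFDeriv ℝ i eP y‖ ≤ D := hD i (him.trans hm) y
                ⟨⟨hy.1.1.le, hy.1.2.le⟩, ⟨hy.2.1.le, hy.2.2.le⟩⟩
            _ ≤ D ^ i := le_self_pow₀ hD1 (by omega))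
    refine hcomp.trans ?_
    have hρ2 : ρ ≤ ε / (k.factorial * E1 * D ^ k) := min_le_right _ _
    rw [le_div_iff₀ (by positivity)] at hρ2
    have hfle : (m.factorial : ℝ) ≤ k.factorial := by exact_mod_cast Nat.factorial_le hm
    have hDle : D ^ m ≤ D ^ k := pow_le_pow_right₀ hD1 hm
    calc (m.factorial : ℝ) * (ρ * E1) * D ^ m ≤ (k.factorial : ℝ) * (ρ * E1) * D ^ k := by
          have h0 : 0 ≤ ρ * E1 := by positivity
          have h1 : (0:ℝ) ≤ D ^ m := by positivity
          have h2 : (0:ℝ) ≤ (k.factorial : ℝ) * (ρ * E1) := by positivity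
          exact mul_le_mul (mul_le_mul_of_nonneg_right hfle h0) hDle h1 h2
      _ = ρ * ((k.factorial : ℝ) * E1 * D ^ k) := by ring
      _ ≤ ε := hρ2
  -- conclude by continuity up to the boundary
  have hs''s₀ : s'' ⊆ s₀ := Set.prod_mono
    (fun t ht => ⟨ht.1, lt_of_lt_of_le ht.2 (by rw [hR''def, hd_def]; linarith)⟩)
    (fun t ht => ⟨lt_trans haa ht.1, lt_trans ht.2 hbb⟩)
  have hs''u : UniqueDiffOn ℝ s'' := uniqueDiffOn_convex
    ((convex_Ico _ _).prod (convex_Ioo _ _))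
    (by rw [interior_prod_eq, interior_Ico, interior_Ioo]
        exact (Set.nonempty_Ioo.2 (lt_trans hR'0 hRR')).prod (Set.nonempty_Ioo.2 ha''b''))
  have hHG : ContDiffOn ℝ (m : ℕ) (fun p => H p - G p) s'' := by
    apply ContDiffOn.sub
    · exact (hH.mono hs''s₀).of_le (by exact_mod_cast (by omega : m ≤ k+2))
    · exact hGsmooth.of_le (by exact_mod_cast le_top)
  have hcont : ContinuousOn
      (fun y => iteratedFDerivWithin ℝ m (fun p => H p - G p) s'' y) s'' :=
    hHG.continuousOn_iteratedFDerivWithin (by exact_mod_cast le_rfl) hs''u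
  have hxs'' : x ∈ s'' := ⟨⟨hx.1.1, lt_of_le_of_lt hx.1.2 hRR'⟩,
    ⟨lt_of_lt_of_le haa' hx.2.1, lt_of_le_of_lt hx.2.2 hbb'⟩⟩
  have hcl : x ∈ closure V := by
    rw [hVdef, closure_prod_eq, closure_Ioo (lt_trans hR'0 hRR').ne,
      closure_Ioo ha''b''.ne]
    exact ⟨⟨hx.1.1, hx.1.2.trans hRR'.le⟩,
      ⟨(lt_of_lt_of_le haa' hx.2.1).le, (lt_of_le_of_lt hx.2.2 hbb').le⟩⟩
  have hne : (𝓝[V] x).NeBot := mem_closure_iff_nhdsWithin_neBot.1 hcl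
  have htends : Tendsto
      (fun y => ‖iteratedFDerivWithin ℝ m (fun p => H p - G p) s'' y‖) (𝓝[V] x)
      (𝓝 ‖iteratedFDerivWithin ℝ m (fun p => H p - G p) s'' x‖) :=
    ((hcont x hxs'').mono hVs'').norm
  exact le_of_tendsto htends (eventually_nhdsWithin_of_forall hVbound)
end
end

section
/- For 0 < R and −π < a < b < π let S(R,a,b) = {z ∈ ℂ : z ≠ 0, |z| < R, a < arg z < b}. Let h be holomorphic on S(R,a,b) and suppose that z ↦ |h(z)|/|z| is integrable on S(R,a,b) with respect to Lebesgue area measure. Then for all a < a' < b' < b and 0 < R' < R, the function z ↦ |h'(z)| is integrable on S(R',a',b') with respect to area measure; equivalently z ↦ |z·h'(z)|/|z| is integrable there, i.e. the operator z·d/dz preserves the class of holomorphic functions on a sector that are locally ℓ¹ for dr dθ. -/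
/-!
Cauchy's formula on the circles `|w - z| = s`, integrated against `s ds` over `0 < s < r`, bounds
`|h'(z)|` by `3 / (2π r³)` times the integral of `|h|` over the disc `B(z, r)`. Take `r = c|z|`
with `c` so small that these discs stay inside the larger sector. By Tonelli,
`∫_{S'} |h'| ≲ ∫_S |h(w)| ∫_{|w - z| < c|z|} |z|⁻³ dz dw`, and the inner integral is `O(1/|w|)`:
on its domain `|z| ≍ |w|`, and the domain has area `O(|w|²)`.
-/

open MeasureTheory

open Metric Set Real
open scoped ENNReal

section Polar

variable {F : Type*} [NormedAddCommGroup F] [NormedSpace ℝ F]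

theorem norm_circleAverage_le (g : ℂ → F) (c : ℂ) (R : ℝ) :
    ‖circleAverage g c R‖ ≤ circleAverage (fun z ↦ ‖g z‖) c R := by
  rw [circleAverage, circleAverage, norm_smul, smul_eq_mul,
    Real.norm_of_nonneg (by positivity)]
  gcongr
  exact intervalIntegral.norm_integral_le_integral_norm two_pi_pos.le

theorem integral_Ioo_circleMap_eq_circleAverage (g : ℂ → F) (c : ℂ) (s : ℝ) :
    ∫ θ in Ioo (-π) π, g (circleMap c s θ) = (2 * π) • circleAverage g c s := by
  rw [circleAverage_eq_integral_add (-π), smul_inv_smul₀ two_pi_pos.ne',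
    intervalIntegral.integral_comp_add_right (fun θ ↦ g (circleMap c s θ)), zero_add, two_mul,
    add_neg_cancel_right, intervalIntegral.integral_of_le (by linarith [pi_pos]),
    integral_Ioc_eq_integral_Ioo]

theorem integral_ball_eq_integral_polar (g : ℂ → F) (c : ℂ) (r : ℝ) :
    ∫ w in ball c r, g w =
      ∫ p in Ioo 0 r ×ˢ Ioo (-π) π, p.1 • g (circleMap c p.1 p.2) := by
  have hG (p : ℝ × ℝ) (hp : 0 < p.1) :
      p.1 • (ball 0 r).indicator (fun w ↦ g (c + w)) (Complex.polarCoord.symm p) =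
        (Iio r ×ˢ univ).indicator (fun p ↦ p.1 • g (circleMap c p.1 p.2)) p := by
    have hpolar : c + Complex.polarCoord.symm p = circleMap c p.1 p.2 := by
      simp [circleMap, Complex.polarCoord_symm_apply, Complex.exp_mul_I]
    by_cases hpr : p.1 < r
    · rw [indicator_of_mem (by simpa [abs_of_pos hp] using hpr),
        indicator_of_mem (by simpa using hpr), hpolar]
    · rw [indicator_of_notMem (by simpa [abs_of_pos hp] using hpr),
        indicator_of_notMem (by simpa using hpr), smul_zero]
  calc ∫ w in ball c r, g w = ∫ w, (ball 0 r).indicator (fun w ↦ g (c + w)) w := by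
        rw [← integral_indicator measurableSet_ball, ← integral_add_left_eq_self _ c]
        simp_rw [← indicator_comp_right (c + ·), preimage_add_ball, sub_self]
        rfl
    _ = ∫ p in Ioi 0 ×ˢ Ioo (-π) π,
          p.1 • (ball 0 r).indicator (fun w ↦ g (c + w)) (Complex.polarCoord.symm p) := by
        rw [← Complex.integral_comp_polarCoord_symm, polarCoord_target]
    _ = ∫ p in Ioo 0 r ×ˢ Ioo (-π) π, p.1 • g (circleMap c p.1 p.2) := by
        rw [setIntegral_congr_fun (measurableSet_Ioi.prod measurableSet_Ioo) fun p hp ↦ hG p hp.1,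
          setIntegral_indicator (measurableSet_Iio.prod MeasurableSet.univ), prod_inter_prod,
          Ioi_inter_Iio, inter_univ]

theorem ContinuousOn.integral_ball_eq_integral_circleAverage {g : ℂ → F} {c : ℂ} {r : ℝ}
    (hg : ContinuousOn g (closedBall c r)) (hr : 0 ≤ r) :
    ∫ w in ball c r, g w = ∫ s in 0..r, (2 * π * s) • circleAverage g c s := by
  have hintegrable : IntegrableOn (fun p : ℝ × ℝ ↦ p.1 • g (circleMap c p.1 p.2))
      (Ioo 0 r ×ˢ Ioo (-π) π) := by
    have hmaps : MapsTo (fun p : ℝ × ℝ ↦ circleMap c p.1 p.2) (Icc 0 r ×ˢ Icc (-π) π)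
        (closedBall c r) := fun p hp ↦
      closedBall_subset_closedBall hp.1.2 (circleMap_mem_closedBall c hp.1.1 p.2)
    refine ContinuousOn.integrableOn_compact (isCompact_Icc.prod isCompact_Icc) ?_
      |>.mono_set (prod_mono Ioo_subset_Icc_self Ioo_subset_Icc_self)
    exact continuous_fst.continuousOn.smul (hg.comp (by fun_prop) hmaps)
  rw [integral_ball_eq_integral_polar, Measure.volume_eq_prod, setIntegral_prod _ hintegrable,
    intervalIntegral.integral_of_le hr, integral_Ioc_eq_integral_Ioo]
  refine setIntegral_congr_fun measurableSet_Ioo fun s _ ↦ ?_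
  rw [integral_smul, integral_Ioo_circleMap_eq_circleAverage, smul_smul, mul_comm s]

end Polar

section CauchyEstimate

variable {E : Type*} [NormedAddCommGroup E] [NormedSpace ℂ E] [CompleteSpace E]
  {f : ℂ → E} {c : ℂ} {r : ℝ}

theorem DiffContOnCl.deriv_eq_circleAverage (hf : DiffContOnCl ℂ f (ball c r)) (hr : 0 < r) :
    deriv f c = Real.circleAverage (fun z ↦ (z - c)⁻¹ • f z) c r := by
  rw [circleAverage_eq_circleIntegral hr.ne', eq_inv_smul_iff₀ (by simp [pi_ne_zero]),
    ← hf.deriv_eq_smul_circleIntegral hr]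
  simp only [smul_smul, one_div, sq, mul_inv]

theorem DiffContOnCl.norm_deriv_mul_le_circleAverage (hf : DiffContOnCl ℂ f (ball c r))
    (hr : 0 < r) : ‖deriv f c‖ * r ≤ Real.circleAverage (fun z ↦ ‖f z‖) c r := by
  have hsphere : EqOn (fun z ↦ ‖(z - c)⁻¹ • f z‖) (fun z ↦ r⁻¹ • ‖f z‖) (sphere c |r|) := by
    intro z hz
    rw [mem_sphere, Complex.dist_eq, abs_of_pos hr] at hz
    simp [norm_smul, hz]
  calc ‖deriv f c‖ * r
      ≤ Real.circleAverage (fun z ↦ ‖(z - c)⁻¹ • f z‖) c r * r := by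
        rw [hf.deriv_eq_circleAverage hr]
        gcongr
        exact norm_circleAverage_le _ c r
    _ = Real.circleAverage (fun z ↦ ‖f z‖) c r := by
        rw [circleAverage_congr_sphere hsphere, circleAverage_fun_smul, smul_eq_mul]
        field_simp

theorem DiffContOnCl.norm_deriv_mul_le_integral_ball (hf : DiffContOnCl ℂ f (ball c r))
    (hr : 0 < r) : ‖deriv f c‖ * (2 * π * r ^ 3 / 3) ≤ ∫ w in ball c r, ‖f w‖ := by
  have hcont : ContinuousOn (fun w ↦ ‖f w‖) (closedBall c r) := hf.continuousOn_ball.norm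
  have hmoment : ‖deriv f c‖ * (2 * π * r ^ 3 / 3) =
      ∫ s in 0..r, (2 * π * s) • (‖deriv f c‖ * s) := by
    simp_rw [smul_eq_mul, show ∀ s : ℝ, 2 * π * s * (‖deriv f c‖ * s) =
      2 * π * ‖deriv f c‖ * s ^ 2 from fun s ↦ by ring]
    rw [intervalIntegral.integral_const_mul, integral_pow]
    ring
  rw [hcont.integral_ball_eq_integral_circleAverage hr.le, hmoment]
  refine intervalIntegral.integral_mono_on hr.le
    ((by fun_prop : Continuous _).intervalIntegrable _ _) ?_ fun s hs ↦ ?_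
  · refine ContinuousOn.intervalIntegrable_of_Icc hr.le ?_
    refine (continuous_const.mul continuous_id).continuousOn.smul ?_
    exact hcont.mono (fun z hz ↦ by simpa [dist_eq_norm] using hz.2) |>.circleAverage
      fun _ h ↦ h.1
  · rcases hs.1.eq_or_lt with rfl | hs0
    · simp
    gcongr
    exact (hf.mono (ball_subset_ball hs.2)).norm_deriv_mul_le_circleAverage hs0

theorem DiffContOnCl.enorm_deriv_le_lintegral_ball (hf : DiffContOnCl ℂ f (ball c r))
    (hr : 0 < r) :
    ‖deriv f c‖ₑ ≤ ENNReal.ofReal (3 / (2 * π * r ^ 3)) * ∫⁻ w in ball c r, ‖f w‖ₑ := by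
  have hint : IntegrableOn f (ball c r) :=
    (hf.continuousOn_ball.integrableOn_compact (isCompact_closedBall c r)).mono_set
      ball_subset_closedBall
  have hderiv : ‖deriv f c‖ ≤ 3 / (2 * π * r ^ 3) * ∫ w in ball c r, ‖f w‖ := by
    rw [div_mul_eq_mul_div, le_div_iff₀ (by positivity)]
    linarith [hf.norm_deriv_mul_le_integral_ball hr]
  rw [← ofReal_integral_norm_eq_lintegral_enorm hint, ← ENNReal.ofReal_mul (by positivity),
    ← ofReal_norm]
  exact ENNReal.ofReal_le_ofReal hderiv

end CauchyEstimate

section Kernel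

variable {c : ℝ}

theorem isOpen_setOf_mem_ball_mul_norm (w : ℂ) : IsOpen {z : ℂ | w ∈ ball z (c * ‖z‖)} :=
  isOpen_lt (continuous_const.dist continuous_id) (continuous_const.mul continuous_norm)

theorem lintegral_inv_norm_pow_three_le (hc0 : 0 < c) (hc1 : c < 1) (w : ℂ) :
    ∫⁻ z in {z : ℂ | w ∈ ball z (c * ‖z‖)}, ENNReal.ofReal (‖z‖⁻¹ ^ 3) ≤
      ENNReal.ofReal ((1 + c) ^ 3 * (c / (1 - c)) ^ 2 * π) * ENNReal.ofReal ‖w‖⁻¹ := by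
  have hbound : ∀ z ∈ {z : ℂ | w ∈ ball z (c * ‖z‖)},
      z ∈ ball w (c / (1 - c) * ‖w‖) ∧ ‖z‖⁻¹ ^ 3 ≤ ((1 + c) * ‖w‖⁻¹) ^ 3 := by
    intro z hz
    rw [mem_ofPred_eq, mem_ball, dist_eq_norm] at hz
    have hupper : ‖w‖ ≤ ‖z‖ + ‖w - z‖ := norm_le_norm_add_norm_sub' w z
    have hlower : ‖z‖ ≤ ‖w‖ + ‖w - z‖ := norm_le_norm_add_norm_sub w z
    have hz0 : 0 < ‖z‖ := pos_of_mul_pos_right ((norm_nonneg _).trans_lt hz) hc0.le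
    have hw0 : 0 < ‖w‖ := by nlinarith
    refine ⟨?_, ?_⟩
    · rw [mem_ball, dist_eq_norm, norm_sub_rev]
      calc ‖w - z‖ < c * ‖z‖ := hz
        _ ≤ c / (1 - c) * ‖w‖ := by
          rw [div_mul_eq_mul_div, le_div_iff₀ (by linarith)]
          nlinarith
    · gcongr
      rw [← div_eq_mul_inv, inv_le_comm₀ hz0 (by positivity), inv_div, div_le_iff₀ (by linarith)]
      linarith
  have hmeas := (isOpen_setOf_mem_ball_mul_norm (c := c) w).measurableSet
  calc ∫⁻ z in {z : ℂ | w ∈ ball z (c * ‖z‖)}, ENNReal.ofReal (‖z‖⁻¹ ^ 3)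
      ≤ ∫⁻ _ in {z : ℂ | w ∈ ball z (c * ‖z‖)}, ENNReal.ofReal (((1 + c) * ‖w‖⁻¹) ^ 3) :=
        setLIntegral_mono' hmeas fun z hz ↦ ENNReal.ofReal_le_ofReal (hbound z hz).2
    _ ≤ ENNReal.ofReal (((1 + c) * ‖w‖⁻¹) ^ 3) * volume (ball w (c / (1 - c) * ‖w‖)) := by
        rw [setLIntegral_const]
        gcongr
        exact fun z hz ↦ (hbound z hz).1
    _ = ENNReal.ofReal ((1 + c) ^ 3 * (c / (1 - c)) ^ 2 * π) * ENNReal.ofReal ‖w‖⁻¹ := by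
        rw [Complex.volume_ball, ← ENNReal.ofReal_pow (by positivity),
          ← ENNReal.ofReal_coe_nnreal, NNReal.coe_real_pi, ← ENNReal.ofReal_mul (by positivity),
          ← ENNReal.ofReal_mul (by positivity), ← ENNReal.ofReal_mul (by positivity)]
        congr 1
        rcases eq_or_ne ‖w‖ 0 with hw | hw
        · simp [hw]
        · field_simp

theorem lintegral_inv_norm_pow_three_mul_lintegral_ball_le (hc0 : 0 < c) (hc1 : c < 1)
    {g : ℂ → ℝ≥0∞} (hg : AEMeasurable g) :
    ∫⁻ z, ENNReal.ofReal (‖z‖⁻¹ ^ 3) * ∫⁻ w in ball z (c * ‖z‖), g w ≤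
      ENNReal.ofReal ((1 + c) ^ 3 * (c / (1 - c)) ^ 2 * π) *
        ∫⁻ w, ENNReal.ofReal ‖w‖⁻¹ * g w := by
  set K : Set (ℂ × ℂ) := {p | p.2 ∈ ball p.1 (c * ‖p.1‖)}
  have hK : MeasurableSet K := (isOpen_lt (continuous_snd.dist continuous_fst)
    (continuous_const.mul (continuous_norm.comp continuous_fst))).measurableSet
  have hweight : Measurable fun z : ℂ ↦ ENNReal.ofReal (‖z‖⁻¹ ^ 3) := by fun_prop
  set k : ℂ × ℂ → ℝ≥0∞ := K.indicator fun p ↦ ENNReal.ofReal (‖p.1‖⁻¹ ^ 3) * g p.2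
  have hk : AEMeasurable k (volume.prod volume) :=
    ((hweight.comp measurable_fst).aemeasurable.mul hg.comp_snd).indicator hK
  calc ∫⁻ z, ENNReal.ofReal (‖z‖⁻¹ ^ 3) * ∫⁻ w in ball z (c * ‖z‖), g w
      = ∫⁻ z, ∫⁻ w, k (z, w) := by
        refine lintegral_congr fun z ↦ ?_
        rw [← lintegral_indicator measurableSet_ball,
          ← lintegral_const_mul'' _ (hg.indicator measurableSet_ball)]
        exact lintegral_congr fun w ↦ by classical simp [k, K, indicator_apply, mul_ite]
    _ = ∫⁻ w, ∫⁻ z, k (z, w) := lintegral_lintegral_swap hk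
    _ = ∫⁻ w, g w * ∫⁻ z in {z : ℂ | w ∈ ball z (c * ‖z‖)}, ENNReal.ofReal (‖z‖⁻¹ ^ 3) := by
        refine lintegral_congr fun w ↦ ?_
        have hA := (isOpen_setOf_mem_ball_mul_norm (c := c) w).measurableSet
        rw [← lintegral_indicator hA, ← lintegral_const_mul'' _ (hweight.indicator hA).aemeasurable]
        exact lintegral_congr fun z ↦ by simp [k, K, indicator_apply, mul_comm]
    _ ≤ ∫⁻ w, g w * (ENNReal.ofReal ((1 + c) ^ 3 * (c / (1 - c)) ^ 2 * π) *
          ENNReal.ofReal ‖w‖⁻¹) := by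
        gcongr with w
        exact lintegral_inv_norm_pow_three_le hc0 hc1 w
    _ = _ := by
        rw [← lintegral_const_mul' _ _ ENNReal.ofReal_ne_top]
        congr with w
        ring

end Kernel

theorem setLIntegral_enorm_deriv_le_of_closedBall_subset {E : Type*} [NormedAddCommGroup E]
    [NormedSpace ℂ E] [CompleteSpace E] {f : ℂ → E} {S T : Set ℂ} {c : ℝ}
    (hf : DifferentiableOn ℂ f S) (hS : MeasurableSet S) (hT : MeasurableSet T) (hT0 : 0 ∉ T)
    (hc0 : 0 < c) (hc1 : c < 1) (hball : ∀ z ∈ T, closedBall z (c * ‖z‖) ⊆ S) :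
    ∫⁻ z in T, ‖deriv f z‖ₑ ≤
      ENNReal.ofReal (3 * (1 + c) ^ 3 / (2 * c * (1 - c) ^ 2)) *
        ∫⁻ w in S, ENNReal.ofReal ‖w‖⁻¹ * ‖f w‖ₑ := by
  set g : ℂ → ℝ≥0∞ := S.indicator fun w ↦ ‖f w‖ₑ
  have hg : AEMeasurable g :=
    (aemeasurable_indicator_iff hS).mpr (hf.continuousOn.enorm.aemeasurable hS)
  have hpointwise : ∀ z ∈ T, ‖deriv f z‖ₑ ≤ ENNReal.ofReal (3 / (2 * π * c ^ 3)) *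
      (ENNReal.ofReal (‖z‖⁻¹ ^ 3) * ∫⁻ w in ball z (c * ‖z‖), g w) := by
    intro z hz
    have hzpos : 0 < ‖z‖ := norm_pos_iff.mpr (ne_of_mem_of_not_mem hz hT0)
    calc ‖deriv f z‖ₑ
        ≤ ENNReal.ofReal (3 / (2 * π * (c * ‖z‖) ^ 3)) * ∫⁻ w in ball z (c * ‖z‖), ‖f w‖ₑ :=
          (hf.diffContOnCl_ball (hball z hz)).enorm_deriv_le_lintegral_ball (by positivity)
      _ = _ := by
        rw [setLIntegral_congr_fun measurableSet_ball fun w hw ↦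
            (indicator_of_mem (hball z hz (ball_subset_closedBall hw)) fun w ↦ ‖f w‖ₑ).symm,
          ← mul_assoc, ← ENNReal.ofReal_mul (by positivity)]
        congr 2
        field_simp
  calc ∫⁻ z in T, ‖deriv f z‖ₑ
      ≤ ∫⁻ z in T, ENNReal.ofReal (3 / (2 * π * c ^ 3)) *
          (ENNReal.ofReal (‖z‖⁻¹ ^ 3) * ∫⁻ w in ball z (c * ‖z‖), g w) :=
        setLIntegral_mono' hT hpointwise
    _ ≤ ENNReal.ofReal (3 / (2 * π * c ^ 3)) *
          ∫⁻ z, ENNReal.ofReal (‖z‖⁻¹ ^ 3) * ∫⁻ w in ball z (c * ‖z‖), g w := by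
        rw [← lintegral_const_mul' _ _ ENNReal.ofReal_ne_top]
        exact setLIntegral_le_lintegral _ _
    _ ≤ ENNReal.ofReal (3 / (2 * π * c ^ 3)) *
          (ENNReal.ofReal ((1 + c) ^ 3 * (c / (1 - c)) ^ 2 * π) *
            ∫⁻ w, ENNReal.ofReal ‖w‖⁻¹ * g w) := by
        gcongr
        exact lintegral_inv_norm_pow_three_mul_lintegral_ball_le hc0 hc1 hg
    _ = _ := by
        simp_rw [g, ← indicator_mul_right _ fun w ↦ ENNReal.ofReal ‖w‖⁻¹]
        rw [lintegral_indicator hS, ← mul_assoc, ← ENNReal.ofReal_mul (by positivity)]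
        congr 2
        have : 1 - c ≠ 0 := by linarith
        field_simp

theorem measurableSet_openSector (R a b : ℝ) : MeasurableSet (openSector R a b) := by
  unfold openSector; measurability

theorem exists_closedBall_mul_norm_subset_openSector {R R' a a' b b' : ℝ} (ha : -π ≤ a)
    (hb : b ≤ π) (hR' : 0 < R') (hRR' : R' < R) (haa' : a < a') (hbb' : b' < b) :
    ∃ c, 0 < c ∧ c < 1 ∧
      ∀ z ∈ openSector R' a' b', closedBall z (c * ‖z‖) ⊆ openSector R a b := by
  obtain ⟨δ, hδ, harg⟩ := Metric.continuousAt_iff.mp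
    (Complex.continuousAt_arg (by simp : (1 : ℂ) ∈ Complex.slitPlane)) (min (a' - a) (b - b'))
    (lt_min (by linarith) (by linarith))
  have hεa := min_le_left (a' - a) (b - b')
  have hεb := min_le_right (a' - a) (b - b')
  set c := min (min (δ / 2) (1 / 2)) ((R - R') / R')
  have hcδ : c < δ := (min_le_left _ _).trans_lt ((min_le_left _ _).trans_lt (by linarith))
  have hc1 : c < 1 := (min_le_left _ _).trans_lt ((min_le_right _ _).trans_lt (by norm_num))
  have hcR : c * R' ≤ R - R' := (le_div_iff₀ hR').mp (min_le_right _ _)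
  refine ⟨c, lt_min (lt_min (by positivity) (by norm_num)) (div_pos (by linarith) hR'), hc1, ?_⟩
  rintro z ⟨hz0, hzR, hza, hzb⟩ w hw
  rw [mem_closedBall, dist_eq_norm] at hw
  have hzpos : 0 < ‖z‖ := norm_pos_iff.mpr hz0
  set u := w / z
  have hu1 : ‖u - 1‖ ≤ c := by
    rwa [div_sub_one hz0, norm_div, div_le_iff₀ hzpos]
  have hu0 : u ≠ 0 := by
    rintro hu
    simp [hu] at hu1
    linarith
  have hwzu : w = z * u := (mul_div_cancel₀ w hz0).symm
  have hargu : |Complex.arg u| < min (a' - a) (b - b') := by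
    simpa using harg (x := u) (by rw [dist_eq_norm]; exact hu1.trans_lt hcδ)
  obtain ⟨hargu_lower, hargu_upper⟩ := abs_lt.mp hargu
  have hargw : Complex.arg w = Complex.arg z + Complex.arg u := by
    rw [hwzu]
    exact Complex.arg_mul hz0 hu0 ⟨by linarith, by linarith⟩
  have hwR : ‖w‖ < R := by
    calc ‖w‖ ≤ ‖z‖ + ‖w - z‖ := norm_le_norm_add_norm_sub' w z
      _ ≤ ‖z‖ + c * ‖z‖ := by gcongr
      _ < R := by nlinarith
  refine ⟨hwzu ▸ mul_ne_zero hz0 hu0, hwR, ?_, ?_⟩ <;> rw [hargw] <;> linarith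

theorem z_ddz_preserves_l1_general
    (R a b : ℝ) (ha : -Real.pi < a)
    (hb : b < Real.pi) (h : ℂ → ℂ)
    (hd : DifferentiableOn ℂ h (openSector R a b))
    (hint : IntegrableOn (fun z : ℂ => ‖h z‖ / ‖z‖)
      (openSector R a b) volume) :
    ∀ a' b' R' : ℝ, a < a' → a' < b' → b' < b → 0 < R' → R' < R →
      IntegrableOn (fun z : ℂ => ‖deriv h z‖)
        (openSector R' a' b') volume := by
  intro a' b' R' haa' _ hbb' hR' hRR'
  obtain ⟨c, hc0, hc1, hball⟩ :=
    exists_closedBall_mul_norm_subset_openSector ha.le hb.le hR' hRR' haa' hbb'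
  have hquotient (w : ℂ) : ‖‖h w‖ / ‖w‖‖ₑ = ENNReal.ofReal ‖w‖⁻¹ * ‖h w‖ₑ := by
    rw [Real.enorm_of_nonneg (by positivity), div_eq_inv_mul,
      ENNReal.ofReal_mul (by positivity), ofReal_norm]
  refine ⟨(measurable_deriv h).norm.aestronglyMeasurable, ?_⟩
  calc ∫⁻ z in openSector R' a' b', ‖‖deriv h z‖‖ₑ
      = ∫⁻ z in openSector R' a' b', ‖deriv h z‖ₑ := by simp_rw [enorm_norm]
    _ ≤ ENNReal.ofReal (3 * (1 + c) ^ 3 / (2 * c * (1 - c) ^ 2)) *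
          ∫⁻ w in openSector R a b, ENNReal.ofReal ‖w‖⁻¹ * ‖h w‖ₑ :=
        setLIntegral_enorm_deriv_le_of_closedBall_subset hd (measurableSet_openSector R a b)
          (measurableSet_openSector R' a' b') (fun h0 ↦ h0.1 rfl) hc0 hc1 hball
    _ < ∞ := ENNReal.mul_lt_top ENNReal.ofReal_lt_top
        (by simpa only [HasFiniteIntegral, hquotient] using hint.hasFiniteIntegral)

/-- Claim Dc:claim8: the operator `z·d/dz` preserves the class of holomorphic
functions on a sector that are locally `ℓ¹` for `dr dθ`: if `|h(z)|/|z|` is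
area-integrable on a sector, then `|h'(z)|` is area-integrable on any strictly
smaller sector. -/
theorem z_ddz_preserves_l1
    (R a b : ℝ) (hR : 0 < R) (ha : -Real.pi < a) (hab : a < b)
    (hb : b < Real.pi) (h : ℂ → ℂ)
    (hd : DifferentiableOn ℂ h (openSector R a b))
    (hint : IntegrableOn (fun z : ℂ => ‖h z‖ / ‖z‖)
      (openSector R a b) volume) :
    ∀ a' b' R' : ℝ, a < a' → a' < b' → b' < b → 0 < R' → R' < R →
      IntegrableOn (fun z : ℂ => ‖deriv h z‖)
        (openSector R' a' b') volume :=
  z_ddz_preserves_l1_general R a b ha hb h hd hint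
end

section
/- Let j ∈ ℕ and R > 0. There is no function Φ : ℝ × ℝ → ℂ such that Φ is C^∞ up to the boundary on [0,R) × ℝ, Φ is 2π-periodic in the second variable (Φ(r, θ+2π) = Φ(r,θ) for all 0 ≤ r < R and θ ∈ ℝ), and (1/2)·( r·∂Φ/∂r(r,θ) + i·∂Φ/∂θ(r,θ) ) = r^j·e^{i·j·θ} for all 0 < r < R and θ ∈ ℝ. -/
open Set Filter Complex MeasureTheory intervalIntegral
open scoped Real Topology

set_option maxHeartbeats 1000000

noncomputable section


def PDEsol (R : ℝ) (j : ℕ) (Φ : ℝ × ℝ → ℂ) : Prop :=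
  ContDiffOn ℝ (⊤ : ℕ∞) Φ (Set.Ico 0 R ×ˢ (Set.univ : Set ℝ)) ∧
  (∀ r θ : ℝ, 0 ≤ r → r < R → Φ (r, θ + 2 * Real.pi) = Φ (r, θ)) ∧
  (∀ r θ : ℝ, 0 < r → r < R →
    (1 / 2 : ℂ) * ((r : ℂ) * deriv (fun t : ℝ => Φ (t, θ)) r
      + Complex.I * deriv (fun t : ℝ => Φ (r, t)) θ)
      = (r : ℂ) ^ j * Complex.exp (Complex.I * j * θ))

lemma uniqS (R : ℝ) : UniqueDiffOn ℝ (Ico (0:ℝ) R ×ˢ (univ : Set ℝ)) :=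
  (uniqueDiffOn_Ico 0 R).prod uniqueDiffOn_univ

lemma memS {R r θ : ℝ} (h1 : 0 ≤ r) (h2 : r < R) :
    (r, θ) ∈ Ico (0:ℝ) R ×ˢ (univ : Set ℝ) := ⟨⟨h1, h2⟩, trivial⟩

lemma Snhds {R r θ : ℝ} (h1 : 0 < r) (h2 : r < R) :
    Ico (0:ℝ) R ×ˢ (univ : Set ℝ) ∈ 𝓝 (r, θ) :=
  mem_nhds_iff.2 ⟨Ioo (0:ℝ) R ×ˢ (univ : Set ℝ),
    prod_mono Ioo_subset_Ico_self (subset_refl _), isOpen_Ioo.prod isOpen_univ,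
    ⟨⟨h1, h2⟩, trivial⟩⟩

section slices
variable {R : ℝ} {Φ : ℝ × ℝ → ℂ}
  (hΦ : ContDiffOn ℝ (⊤ : ℕ∞) Φ (Ico (0:ℝ) R ×ˢ (univ : Set ℝ)))

include hΦ

lemma sliceCont {r : ℝ} (h1 : 0 ≤ r) (h2 : r < R) :
    Continuous (fun t => Φ (r, t)) := by
  rw [← continuousOn_univ]
  exact hΦ.continuousOn.comp ((continuous_const.prodMk continuous_id).continuousOn)
    (fun t _ => memS h1 h2)

lemma hsliceR {r θ : ℝ} (h1 : 0 < r) (h2 : r < R) :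
    HasDerivAt (fun t => Φ (t, θ)) (fderiv ℝ Φ (r, θ) (1, 0)) r := by
  have h := ((hΦ.contDiffAt (Snhds (θ:=θ) h1 h2)).differentiableAt (by simp)).hasFDerivAt
  exact h.comp_hasDerivAt r ((hasDerivAt_id r).prodMk (hasDerivAt_const r θ))

lemma hsliceT {r θ : ℝ} (h1 : 0 < r) (h2 : r < R) :
    HasDerivAt (fun t => Φ (r, t)) (fderiv ℝ Φ (r, θ) (0, 1)) θ := by
  have h := ((hΦ.contDiffAt (Snhds (θ:=θ) h1 h2)).differentiableAt (by simp)).hasFDerivAt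
  exact h.comp_hasDerivAt θ ((hasDerivAt_const θ r).prodMk (hasDerivAt_id θ))

lemma AeqW {r θ : ℝ} (h1 : 0 < r) (h2 : r < R) (v : ℝ × ℝ) :
    fderivWithin ℝ Φ (Ico (0:ℝ) R ×ˢ (univ : Set ℝ)) (r, θ) v = fderiv ℝ Φ (r, θ) v := by
  rw [fderivWithin_of_mem_nhds (Snhds h1 h2)]

lemma Acont (v : ℝ × ℝ) :
    ContinuousOn (fun p => fderivWithin ℝ Φ (Ico (0:ℝ) R ×ˢ (univ : Set ℝ)) p v)
      (Ico (0:ℝ) R ×ˢ (univ : Set ℝ)) :=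
  ((hΦ.fderivWithin (m := (⊤ : ℕ∞)) (uniqS R) (by simp)).clm_apply contDiffOn_const).continuousOn

end slices

lemma base (R : ℝ) (hR : 0 < R) : ¬ ∃ Φ, PDEsol R 0 Φ := by
  rintro ⟨Φ, hΦ, hper, hpde⟩
  set S : Set (ℝ × ℝ) := Ico (0:ℝ) R ×ˢ (univ : Set ℝ) with hSdef
  set g : ℝ → ℂ := fun r => ∫ θ in (0:ℝ)..(2*π), Φ (r, θ) with hgdef
  set A : ℝ × ℝ → ℂ := fun p => fderivWithin ℝ Φ S p (1, 0) with hAdef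
  set B : ℝ × ℝ → ℂ := fun p => fderivWithin ℝ Φ S p (0, 1) with hBdef
  -- continuity of slices of A, B
  have hAslice : ∀ {r : ℝ}, 0 ≤ r → r < R → Continuous (fun t => A (r, t)) := by
    intro r h1 h2
    rw [← continuousOn_univ]
    exact (Acont hΦ (1,0)).comp ((continuous_const.prodMk continuous_id).continuousOn)
      (fun t _ => memS h1 h2)
  have hBslice : ∀ {r : ℝ}, 0 ≤ r → r < R → Continuous (fun t => B (r, t)) := by
    intro r h1 h2
    rw [← continuousOn_univ]
    exact (Acont hΦ (0,1)).comp ((continuous_const.prodMk continuous_id).continuousOn)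
      (fun t _ => memS h1 h2)
  -- the integrated ODE : g has derivative 4π/r on (0,R)
  have hgd : ∀ r : ℝ, 0 < r → r < R → HasDerivAt g (4 * (π:ℂ) / (r:ℂ)) r := by
    intro r0 h1 h2
    set ε : ℝ := min r0 (R - r0) / 2 with hεdef
    have hε : 0 < ε := by
      have := sub_pos.2 h2
      positivity
    have hεr : ε < r0 := by
      have h := min_le_left r0 (R - r0); simp only [hεdef]; linarith
    have hεR : r0 + ε < R := by
      have h := min_le_right r0 (R - r0); simp only [hεdef]; linarith
    have hball : ∀ x ∈ Metric.ball r0 ε, 0 < x ∧ x < R := by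
      intro x hx
      rw [Metric.mem_ball, Real.dist_eq, abs_lt] at hx
      constructor <;> linarith
    -- bound on compact set
    set K : Set (ℝ × ℝ) := Icc (r0 - ε) (r0 + ε) ×ˢ uIcc (0:ℝ) (2*π) with hKdef
    have hKS : K ⊆ S := by
      rintro ⟨x, t⟩ ⟨hx, ht⟩
      exact memS (by simp at hx; linarith [hx.1]) (by simp at hx; linarith [hx.2])
    obtain ⟨M, hM⟩ := (isCompact_Icc.prod isCompact_uIcc).exists_bound_of_continuousOn
      ((Acont hΦ (1,0)).mono hKS)
    have hmeas : ∀ᶠ x in 𝓝 r0, AEStronglyMeasurable (fun t => Φ (x, t))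
        (volume.restrict (uIoc (0:ℝ) (2*π))) := by
      filter_upwards [Ioo_mem_nhds h1 h2] with x hx
      exact (sliceCont hΦ hx.1.le hx.2).aestronglyMeasurable
    have hint : IntervalIntegrable (fun t => Φ (r0, t)) volume 0 (2*π) :=
      (sliceCont hΦ h1.le h2).intervalIntegrable _ _
    have hmeas' : AEStronglyMeasurable (fun t => A (r0, t))
        (volume.restrict (uIoc (0:ℝ) (2*π))) := (hAslice h1.le h2).aestronglyMeasurable
    have hbound : ∀ᵐ t ∂(volume : Measure ℝ), t ∈ uIoc (0:ℝ) (2*π) →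
        ∀ x ∈ Metric.ball r0 ε, ‖A (x, t)‖ ≤ M := by
      refine Eventually.of_forall (fun t ht x hx => ?_)
      refine hM (x, t) ⟨?_, uIoc_subset_uIcc ht⟩
      rw [Metric.mem_ball, Real.dist_eq, abs_lt] at hx
      constructor <;> [linarith [hx.1]; linarith [hx.2]]
    have hbint : IntervalIntegrable (fun _ : ℝ => M) volume 0 (2*π) :=
      intervalIntegrable_const
    have hderiv : ∀ᵐ t ∂(volume : Measure ℝ), t ∈ uIoc (0:ℝ) (2*π) →
        ∀ x ∈ Metric.ball r0 ε, HasDerivAt (fun x => Φ (x, t)) (A (x, t)) x := by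
      refine Eventually.of_forall (fun t ht x hx => ?_)
      obtain ⟨hx1, hx2⟩ := hball x hx
      have hh := hsliceR hΦ hx1 hx2 (θ := t)
      rwa [← AeqW hΦ hx1 hx2] at hh
    have kk := (intervalIntegral.hasDerivAt_integral_of_dominated_loc_of_deriv_le
      (Metric.ball_mem_nhds r0 hε) hmeas hint hmeas' hbound hbint hderiv).2
    have hval : (∫ t in (0:ℝ)..(2*π), A (r0, t)) = 4 * (π:ℂ) / (r0:ℂ) := by
      have hptw : ∀ θ : ℝ, A (r0, θ) = 2 / (r0:ℂ) - (Complex.I / (r0:ℂ)) * B (r0, θ) := by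
        intro θ
        have hp := hpde r0 θ h1 h2
        rw [(hsliceR hΦ h1 h2).deriv, (hsliceT hΦ h1 h2).deriv] at hp
        rw [← AeqW hΦ h1 h2 (1,0), ← AeqW hΦ h1 h2 (0,1)] at hp
        have hr0 : (r0:ℂ) ≠ 0 := Complex.ofReal_ne_zero.2 h1.ne'
        simp only [pow_zero, Nat.cast_zero, mul_zero, zero_mul, Complex.exp_zero] at hp
        have h2' : (r0:ℂ) * A (r0, θ) + Complex.I * B (r0, θ) = 2 := by
          linear_combination 2 * hp
        field_simp
        linear_combination h2'
      have hBint : (∫ θ in (0:ℝ)..(2*π), B (r0, θ)) = 0 := by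
        have hft := intervalIntegral.integral_eq_sub_of_hasDerivAt
          (a := (0:ℝ)) (b := 2*π) (f := fun t => Φ (r0, t)) (f' := fun θ => B (r0, θ))
          (fun θ _ => by
            have hh := hsliceT hΦ h1 h2 (θ := θ)
            rwa [← AeqW hΦ h1 h2 (0,1)] at hh)
          ((hBslice h1.le h2).intervalIntegrable _ _)
        rw [hft]
        have hp := hper r0 0 h1.le h2
        rw [zero_add] at hp
        simpa [sub_eq_zero] using hp
      have hcongr : (∫ θ in (0:ℝ)..(2*π), A (r0, θ))
          = ∫ θ in (0:ℝ)..(2*π), (2 / (r0:ℂ) - (Complex.I / (r0:ℂ)) * B (r0, θ)) :=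
        intervalIntegral.integral_congr (fun θ _ => hptw θ)
      rw [hcongr, intervalIntegral.integral_sub (g := fun θ => Complex.I / (r0:ℂ) * B (r0, θ))
        intervalIntegrable_const
        ((continuous_const.mul (hBslice h1.le h2)).intervalIntegrable _ _),
        intervalIntegral.integral_const_mul, hBint, mul_zero, sub_zero,
        intervalIntegral.integral_const]
      have hr0 : (r0:ℂ) ≠ 0 := Complex.ofReal_ne_zero.2 h1.ne'
      rw [sub_zero, real_smul]
      push_cast
      field_simp
      ring
    rw [hval] at kk
    exact kk
  -- b := R/2
  set b : ℝ := R / 2 with hbdef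
  have hb0 : 0 < b := by positivity
  have hbR : b < R := by simp only [hbdef]; linarith
  -- constancy of g x - 4π log x
  set F : ℝ → ℂ := fun x => g x - (4 * (π:ℂ)) * (Real.log x : ℂ) with hFdef
  have hFd : ∀ x : ℝ, 0 < x → x < R → HasDerivAt F 0 x := by
    intro x hx1 hx2
    have h1 := hgd x hx1 hx2
    have h2 : HasDerivAt (fun y : ℝ => ((Real.log y : ℝ) : ℂ)) ((x⁻¹ : ℝ) : ℂ) x :=
      (Real.hasDerivAt_log hx1.ne').ofReal_comp
    have := h1.sub (h2.const_mul (4 * (π:ℂ)))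
    refine this.congr_deriv ?_
    have hx0 : (x:ℂ) ≠ 0 := Complex.ofReal_ne_zero.2 hx1.ne'
    push_cast
    ring
  have hconst : ∀ a : ℝ, 0 < a → a ≤ b → F b = F a := by
    intro a ha hab
    exact constant_of_has_deriv_right_zero
      (fun x hx => (hFd x (lt_of_lt_of_le ha hx.1) (lt_of_le_of_lt hx.2 hbR)).continuousAt.continuousWithinAt)
      (fun x hx => (hFd x (lt_of_lt_of_le ha hx.1) (lt_trans hx.2 hbR)).hasDerivWithinAt)
      b ⟨hab, le_refl b⟩
  -- g tends to g 0 along 𝓝[>] 0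
  have hg0 : Tendsto g (𝓝[>] (0:ℝ)) (𝓝 (g 0)) := by
    obtain ⟨M, hM⟩ := (isCompact_Icc.prod isCompact_uIcc :
        IsCompact (Icc (0:ℝ) b ×ˢ uIcc (0:ℝ) (2*π))).exists_bound_of_continuousOn
      (hΦ.continuousOn.mono (by
        rintro ⟨x, t⟩ ⟨hx, ht⟩
        exact memS hx.1 (lt_of_le_of_lt hx.2 hbR)))
    have hIoc : Ioc (0:ℝ) b ∈ 𝓝[>] (0:ℝ) := Ioc_mem_nhdsGT_of_mem ⟨le_refl 0, hb0⟩
    apply intervalIntegral.tendsto_integral_filter_of_dominated_convergence (fun _ => M)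
    · filter_upwards [hIoc] with x hx
      exact (sliceCont hΦ hx.1.le (lt_of_le_of_lt hx.2 hbR)).aestronglyMeasurable
    · filter_upwards [hIoc] with x hx
      refine Eventually.of_forall (fun t ht => ?_)
      exact hM (x, t) ⟨⟨hx.1.le, hx.2⟩, uIoc_subset_uIcc ht⟩
    · exact intervalIntegrable_const
    · refine Eventually.of_forall (fun t ht => ?_)
      have hc : ContinuousWithinAt Φ S (0, t) := hΦ.continuousOn _ (memS (le_refl 0) hR)
      have hmap : Tendsto (fun a : ℝ => (a, t)) (𝓝[>] (0:ℝ)) (𝓝[S] (0, t)) := by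
        rw [tendsto_nhdsWithin_iff]
        constructor
        · exact ((continuous_id.prodMk continuous_const).tendsto 0).mono_left nhdsWithin_le_nhds
        · filter_upwards [hIoc] with a ha
          exact memS ha.1.le (lt_of_le_of_lt ha.2 hbR)
      exact hc.tendsto.comp hmap
  -- divergence of the real part
  have hdiv : Tendsto (fun a => (g a).re) (𝓝[>] (0:ℝ)) atBot := by
    have heq : ∀ᶠ a in 𝓝[>] (0:ℝ),
        (F b).re + 4 * π * Real.log a = (g a).re := by
      filter_upwards [Ioc_mem_nhdsGT_of_mem ⟨le_refl 0, hb0⟩] with a ha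
      have hc := hconst a ha.1 ha.2
      have hga : g a = F b + ((4 * π * Real.log a : ℝ) : ℂ) := by
        rw [hc]; simp only [hFdef]; push_cast; ring
      rw [hga, Complex.add_re, Complex.ofReal_re]
    refine Tendsto.congr' heq ?_
    have h1 : Tendsto (fun a : ℝ => 4 * π * Real.log a) (𝓝[>] (0:ℝ)) atBot :=
      (Real.tendsto_log_nhdsGT_zero).const_mul_atBot (by positivity)
    exact tendsto_atBot_add_const_left _ _ h1
  have hfin : Tendsto (fun a => (g a).re) (𝓝[>] (0:ℝ)) (𝓝 ((g 0).re)) :=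
    (Complex.continuous_re.tendsto _).comp hg0
  exact not_tendsto_atBot_of_tendsto_nhds hfin hdiv

lemma step (R : ℝ) (hR : 0 < R) (j : ℕ) (ih : ¬ ∃ Φ, PDEsol R j Φ) :
    ¬ ∃ Φ, PDEsol R (j+1) Φ := by
  rintro ⟨Φ, hΦ, hper, hpde⟩
  apply ih
  set S : Set (ℝ × ℝ) := Ico (0:ℝ) R ×ˢ (univ : Set ℝ) with hSdef
  have hj1 : ((j:ℂ) + 1) ≠ 0 := by
    have h : ((j+1 : ℕ) : ℂ) ≠ 0 := Nat.cast_ne_zero.2 (Nat.succ_ne_zero j)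
    push_cast at h; exact h
  set c : ℂ := ((j:ℂ) + 1)⁻¹ with hcdef
  refine ⟨fun p => c * (Complex.exp (-Complex.I * p.2) *
      fderivWithin ℝ Φ S p (1, 0)), ?_, ?_, ?_⟩
  · -- smoothness
    apply ContDiffOn.mul contDiffOn_const
    apply ContDiffOn.mul
    · exact (Complex.contDiff_exp.comp (contDiff_const.mul
        (Complex.ofRealCLM.contDiff.comp contDiff_snd))).contDiffOn
    · exact (hΦ.fderivWithin (m := (⊤ : ℕ∞)) (uniqS R) (by simp)).clm_apply contDiffOn_const
  · -- periodicity
    intro r θ h1 h2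
    have hp : (r, θ) ∈ S := memS h1 h2
    have hT : ∀ q : ℝ × ℝ, HasFDerivAt (fun q : ℝ × ℝ => (q.1, q.2 + 2*π))
        (ContinuousLinearMap.id ℝ (ℝ × ℝ)) q := by
      intro q
      have h : HasFDerivAt (fun q : ℝ × ℝ => q + ((0:ℝ), 2*π))
          (ContinuousLinearMap.id ℝ (ℝ × ℝ)) q := (hasFDerivAt_id q).add_const _
      have heq : (fun q : ℝ × ℝ => q + ((0:ℝ), 2*π)) = fun q : ℝ × ℝ => (q.1, q.2 + 2*π) := by
        funext p; ext <;> simp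
      rwa [heq] at h
    have hmaps : MapsTo (fun q : ℝ × ℝ => (q.1, q.2 + 2*π)) S S := by
      rintro ⟨x, t⟩ ⟨hx, -⟩; exact ⟨hx, trivial⟩
    have hdΦ : DifferentiableWithinAt ℝ Φ S ((fun q : ℝ × ℝ => (q.1, q.2 + 2*π)) (r, θ)) :=
      (hΦ.differentiableOn (by simp)) _ (memS h1 h2)
    have hdT : DifferentiableWithinAt ℝ (fun q : ℝ × ℝ => (q.1, q.2 + 2*π)) S (r, θ) :=
      (hT _).differentiableAt.differentiableWithinAt
    have hcomp := fderivWithin_comp (𝕜 := ℝ) ((r, θ) : ℝ × ℝ) (t := S) hdΦ hdT hmaps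
      ((uniqS R) _ hp)
    have hTfd : fderivWithin ℝ (fun q : ℝ × ℝ => (q.1, q.2 + 2*π)) S (r, θ)
        = ContinuousLinearMap.id ℝ (ℝ × ℝ) :=
      ((hT (r, θ)).hasFDerivWithinAt).fderivWithin ((uniqS R) _ hp)
    have hcong : fderivWithin ℝ (Φ ∘ (fun q : ℝ × ℝ => (q.1, q.2 + 2*π))) S (r, θ)
        = fderivWithin ℝ Φ S (r, θ) :=
      fderivWithin_congr (fun q hq => hper q.1 q.2 hq.1.1 hq.1.2) (hper r θ h1 h2)
    rw [hTfd, ContinuousLinearMap.comp_id, hcong] at hcomp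
    have hfd : fderivWithin ℝ Φ S (r, θ + 2*π) = fderivWithin ℝ Φ S (r, θ) := hcomp.symm
    have hexp : Complex.exp (-Complex.I * ((θ + 2*π : ℝ) : ℂ))
        = Complex.exp (-Complex.I * (θ:ℂ)) := by
      push_cast
      rw [mul_add, Complex.exp_add]
      have h0 : Complex.exp (-Complex.I * (2*(π:ℂ))) = 1 := by
        rw [show -Complex.I * (2*(π:ℂ)) = -(2*(π:ℂ)*Complex.I) by ring, Complex.exp_neg,
          Complex.exp_two_pi_mul_I, inv_one]
      rw [h0, mul_one]
    simp only
    rw [hfd, hexp]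
  · -- the PDE
    intro r θ h1 h2
    set f' : ℝ × ℝ → (ℝ × ℝ) →L[ℝ] ℂ := fderiv ℝ Φ with hf'def
    set d2 : (ℝ × ℝ) →L[ℝ] (ℝ × ℝ) →L[ℝ] ℂ := fderiv ℝ f' (r, θ) with hd2def
    have hooU : IsOpen (Ioo (0:ℝ) R ×ˢ (univ : Set ℝ)) := isOpen_Ioo.prod isOpen_univ
    have hf'cd : ContDiffAt ℝ 1 f' (r, θ) :=
      (hΦ.contDiffAt (Snhds h1 h2)).fderiv_right (WithTop.coe_le_coe.2 le_top)
    have hf'' : HasFDerivAt f' d2 (r, θ) := (hf'cd.differentiableAt one_ne_zero).hasFDerivAt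
    -- slice derivatives of the partial-derivative functions
    have hone : ∀ x : ℝ, HasDerivAt (fun t : ℝ => ((t:ℝ):ℂ)) 1 x := by
      intro x; simpa using (hasDerivAt_id x).ofReal_comp
    have hAr : HasDerivAt (fun t : ℝ => f' (t, θ) (1, 0)) ((d2 (1, 0)) (1, 0)) r := by
      have h := (hf''.comp_hasDerivAt r
        ((hasDerivAt_id r).prodMk (hasDerivAt_const r θ))).clm_apply
        (hasDerivAt_const r ((1:ℝ), (0:ℝ)))
      simpa using h
    have hBr : HasDerivAt (fun t : ℝ => f' (t, θ) (0, 1)) ((d2 (1, 0)) (0, 1)) r := by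
      have h := (hf''.comp_hasDerivAt r
        ((hasDerivAt_id r).prodMk (hasDerivAt_const r θ))).clm_apply
        (hasDerivAt_const r ((0:ℝ), (1:ℝ)))
      simpa using h
    have hAθ : HasDerivAt (fun t : ℝ => f' (r, t) (1, 0)) ((d2 (0, 1)) (1, 0)) θ := by
      have h := (hf''.comp_hasDerivAt θ
        ((hasDerivAt_const θ r).prodMk (hasDerivAt_id θ))).clm_apply
        (hasDerivAt_const θ ((1:ℝ), (0:ℝ)))
      simpa using h
    -- symmetry of second derivatives
    have hsymm : (d2 (1, 0)) (0, 1) = (d2 (0, 1)) (1, 0) := by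
      have hev : ∀ᶠ y in 𝓝 ((r, θ) : ℝ × ℝ), HasFDerivAt Φ (f' y) y := by
        filter_upwards [hooU.mem_nhds (by exact ⟨⟨h1, h2⟩, trivial⟩)] with q hq
        exact ((hΦ.contDiffAt (Snhds hq.1.1 hq.1.2)).differentiableAt (by simp)).hasFDerivAt
      exact second_derivative_symmetric_of_eventually hev hf'' (1, 0) (0, 1)
    -- differentiate the PDE in r
    have hev2 : (fun t : ℝ => (1/2:ℂ) * ((t:ℂ) * (f' (t, θ) (1, 0))
        + Complex.I * (f' (t, θ) (0, 1))))
        =ᶠ[𝓝 r] (fun t : ℝ => ((t:ℂ))^(j+1)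
          * Complex.exp (Complex.I * ((j+1:ℕ):ℂ) * θ)) := by
      filter_upwards [Ioo_mem_nhds h1 h2] with t ht
      have hp := hpde t θ ht.1 ht.2
      rwa [(hsliceR hΦ ht.1 ht.2).deriv, (hsliceT hΦ ht.1 ht.2).deriv] at hp
    have hL : HasDerivAt (fun t : ℝ => (1/2:ℂ) * ((t:ℂ) * (f' (t, θ) (1, 0))
        + Complex.I * (f' (t, θ) (0, 1))))
        ((1/2:ℂ) * ((f' (r, θ) (1, 0)) + (r:ℂ) * ((d2 (1, 0)) (1, 0))
          + Complex.I * ((d2 (1, 0)) (0, 1)))) r := by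
      have h := (((hone r).mul hAr).add (hBr.const_mul Complex.I)).const_mul (1/2:ℂ)
      refine h.congr_deriv ?_
      ring
    have hRd : HasDerivAt (fun t : ℝ => ((t:ℂ))^(j+1)
        * Complex.exp (Complex.I * ((j+1:ℕ):ℂ) * θ))
        (((j+1:ℕ):ℂ) * (r:ℂ)^j * Complex.exp (Complex.I * ((j+1:ℕ):ℂ) * θ)) r := by
      have hpow : HasDerivAt (fun t : ℝ => ((t:ℂ))^(j+1))
          (((j+1:ℕ):ℂ) * (r:ℂ)^j) r := by
        have h := (hasDerivAt_pow (j+1) ((r:ℝ):ℂ)).comp_ofReal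
        simpa using h
      have h := hpow.mul_const (Complex.exp (Complex.I * ((j+1:ℕ):ℂ) * θ))
      convert h using 1
    have hkey : (1/2:ℂ) * ((f' (r, θ) (1, 0)) + (r:ℂ) * ((d2 (1, 0)) (1, 0))
        + Complex.I * ((d2 (1, 0)) (0, 1)))
        = ((j+1:ℕ):ℂ) * (r:ℂ)^j * Complex.exp (Complex.I * ((j+1:ℕ):ℂ) * θ) := by
      have h := hev2.deriv_eq
      rwa [hL.deriv, hRd.deriv] at h
    -- derivatives of Ψ slices
    have hWA : ∀ {x t : ℝ}, 0 < x → x < R →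
        fderivWithin ℝ Φ S (x, t) = f' (x, t) := by
      intro x t hx1 hx2
      exact fderivWithin_of_mem_nhds (Snhds hx1 hx2)
    have hΨr : deriv (fun t : ℝ => c * (Complex.exp (-Complex.I * ((θ:ℝ):ℂ)) *
        fderivWithin ℝ Φ S (t, θ) (1, 0))) r
        = c * (Complex.exp (-Complex.I * (θ:ℂ)) * ((d2 (1, 0)) (1, 0))) := by
      have hev3 : (fun t : ℝ => c * (Complex.exp (-Complex.I * ((θ:ℝ):ℂ)) *
          fderivWithin ℝ Φ S (t, θ) (1, 0)))
          =ᶠ[𝓝 r] (fun t : ℝ => c * (Complex.exp (-Complex.I * (θ:ℂ)) * (f' (t, θ) (1, 0)))) := by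
        filter_upwards [Ioo_mem_nhds h1 h2] with t ht
        rw [hWA ht.1 ht.2]
      rw [hev3.deriv_eq]
      exact (((hAr.const_mul (Complex.exp (-Complex.I * (θ:ℂ)))).const_mul c)).deriv
    have hΨθ : deriv (fun t : ℝ => c * (Complex.exp (-Complex.I * ((t:ℝ):ℂ)) *
        fderivWithin ℝ Φ S (r, t) (1, 0))) θ
        = c * ((Complex.exp (-Complex.I * (θ:ℂ)) * (-Complex.I)) * (f' (r, θ) (1, 0))
          + Complex.exp (-Complex.I * (θ:ℂ)) * ((d2 (0, 1)) (1, 0))) := by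
      have hfe : (fun t : ℝ => c * (Complex.exp (-Complex.I * ((t:ℝ):ℂ)) *
          fderivWithin ℝ Φ S (r, t) (1, 0)))
          = (fun t : ℝ => c * (Complex.exp (-Complex.I * ((t:ℝ):ℂ)) * (f' (r, t) (1, 0)))) := by
        funext t
        rw [hWA h1 h2]
      rw [hfe]
      have hexpd : HasDerivAt (fun t : ℝ => Complex.exp (-Complex.I * ((t:ℝ):ℂ)))
          (Complex.exp (-Complex.I * (θ:ℂ)) * (-Complex.I)) θ := by
        have h := ((hone θ).const_mul (-Complex.I)).cexp
        simpa using h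
      exact (((hexpd.mul hAθ)).const_mul c).deriv
    simp only
    rw [hΨr, hΨθ, ← hsymm]
    have hexp2 : Complex.exp (-Complex.I * (θ:ℂ)) * Complex.exp (Complex.I * ((j+1:ℕ):ℂ) * θ)
        = Complex.exp (Complex.I * (j:ℂ) * θ) := by
      rw [← Complex.exp_add]; congr 1; push_cast; ring
    have hcmul : c * ((j:ℂ) + 1) = 1 := inv_mul_cancel₀ hj1
    push_cast at hkey hexp2 ⊢
    linear_combination (c * Complex.exp (-Complex.I * (θ:ℂ))) * hkey
      + (c * ((j:ℂ)+1) * (r:ℂ)^j) * hexp2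
      + ((r:ℂ)^j * Complex.exp (Complex.I * (j:ℂ) * θ)) * hcmul
      + (-(1/2) * c * Complex.exp (-Complex.I * (θ:ℂ)) * (f' (r, θ) (1, 0))) * Complex.I_sq

lemma key (R : ℝ) (hR : 0 < R) : ∀ j, ¬ ∃ Φ, PDEsol R j Φ
  | 0 => base R hR
  | (j+1) => step R hR j (key R hR j)

end

/-- The obstruction computation (Dc37)–(Dc38) in Bonus Dc:bonus1: no monomial
class `z^j·dz̄/z̄` is `∂̄`-exact along the whole boundary circle of the real
blow-up: there is no `2π`-periodic-in-`θ` function `Φ`, `C^∞` up to the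
boundary `{r = 0}` of `[0,R) × ℝ`, with
`(1/2)(r ∂Φ/∂r + i ∂Φ/∂θ) = r^j e^{ijθ}`. -/
theorem no_solution_for_monomial_class
    (j : ℕ) (R : ℝ) (hR : 0 < R) :
    ¬ ∃ Φ : ℝ × ℝ → ℂ,
      ContDiffOn ℝ (⊤ : ℕ∞) Φ (Set.Ico 0 R ×ˢ (Set.univ : Set ℝ)) ∧
      (∀ r θ : ℝ, 0 ≤ r → r < R → Φ (r, θ + 2 * Real.pi) = Φ (r, θ)) ∧
      (∀ r θ : ℝ, 0 < r → r < R →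
        (1 / 2 : ℂ) * ((r : ℂ) * deriv (fun t : ℝ => Φ (t, θ)) r
          + Complex.I * deriv (fun t : ℝ => Φ (r, t)) θ)
          = (r : ℂ) ^ j * Complex.exp (Complex.I * j * θ)) := key R hR j
end
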